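/- arXiv:2111.01745 — 5 statements merged into one kernel-verified Lean document; each statement's English description precedes it below -/
import Mathlib

section
/- Fix a prime p, an integer R₀, I ∈ ℚ_p, r ∈ ℤ, j ∈ {1,…,p−1}, and a representative n of ℚ_p/ℤ_p. Then for all x ∈ ℚ_p: (i) if r ≤ −R₀ and p^{−r}n−I ∈ p^{R₀}ℤ_p, then Ω(p^{R₀}|x−I|_p)·Ψ_{rnj}(x) = Ψ_{rnj}(x); (ii) if r ≤ −R₀ and p^{−r}n−I ∉ p^{R₀}ℤ_p, then Ω(p^{R₀}|x−I|_p)·Ψ_{rnj}(x) = 0; (iii) if r ≥ −R₀+1 and p^{−r}n−I ∈ p^{−r}ℤ_p, then Ω(p^{R₀}|x−I|_p)·Ψ_{rnj}(x) = c·p^{−r/2}·Ω(p^{R₀}|x−I|_p), where c = χ_p(p^{−1}j(p^r I−n)) is a p-th root of unity; (iv) if r ≥ −R₀+1 and p^{−r}n−I ∉ p^{−r}ℤ_p, then Ω(p^{R₀}|x−I|_p)·Ψ_{rnj}(x) = 0. -/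
/-!
The wavelet is `p^{-r/2}` times a character times the indicator of the ball
`p^{-r}n + p^{-r}ℤ_p`. Two balls of `ℚ_p` are nested or disjoint, and the smaller one lies in the
larger one iff its centre does. For `r ≤ -R₀` the wavelet's ball is the smaller one; otherwise
`I + p^{R₀}ℤ_p` is, and on it the phase `p⁻¹j(p^r x - n)` moves only by elements of `ℤ_p`, which
`χ_p` does not see. The phase at `I` has norm at most `p`, so `p` times it lies in `ℤ_p` and its
character value is a `p`-th root of unity.
-/

open MeasureTheory Filter
open scoped Real Topology ENNReal NNReal

namespace PadicES

variable (p : ℕ) [Fact p.Prime]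

noncomputable instance : MeasurableSpace ℚ_[p] := borel _
instance : BorelSpace ℚ_[p] := ⟨rfl⟩
noncomputable instance : DecidableEq ℚ_[p] := Classical.decEq _

/-- The closed unit ball `ℤ_p` viewed as a subset of `ℚ_p`. -/
def unitBall : Set ℚ_[p] := {x : ℚ_[p] | ‖x‖ ≤ 1}

lemma isCompact_unitBall : IsCompact (unitBall p) := by
  have : unitBall p = Metric.closedBall (0 : ℚ_[p]) 1 := by
    ext x; simp [unitBall, Metric.mem_closedBall, dist_eq_norm]
  rw [this]; exact isCompact_closedBall _ _

lemma interior_unitBall_nonempty : (interior (unitBall p)).Nonempty := by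
  have : unitBall p = Metric.closedBall (0 : ℚ_[p]) 1 := by
    ext x; simp [unitBall, Metric.mem_closedBall, dist_eq_norm]
  rw [this, (IsUltrametricDist.isOpen_closedBall (0 : ℚ_[p]) one_ne_zero).interior_eq]
  exact ⟨0, by simp⟩

/-- The Haar measure `dx` on `(ℚ_p, +)`, normalized so that `ℤ_p` has measure `1`. -/
noncomputable def haar : Measure ℚ_[p] :=
  Measure.addHaarMeasure ⟨⟨unitBall p, isCompact_unitBall p⟩, interior_unitBall_nonempty p⟩

lemma norm_scaled_le_one (y : ℚ_[p]) (h : ¬ ‖y‖ ≤ 1) :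
    ‖(p : ℚ_[p]) ^ ((-y.valuation).toNat) * y‖ ≤ 1 := by
  have hy : y ≠ 0 := by rintro rfl; simp at h
  have hv : y.valuation < 0 := by
    by_contra hv
    push_neg at hv
    exact h ((Padic.norm_le_one_iff_val_nonneg (p := p) y).mpr hv)
  have hp0 : (0 : ℝ) < (p : ℝ) := by
    exact_mod_cast (Fact.out : p.Prime).pos
  rw [norm_mul, norm_pow, Padic.norm_p, Padic.norm_eq_zpow_neg_valuation hy]
  rw [inv_pow, ← zpow_natCast, Int.toNat_of_nonneg (by omega)]
  rw [← zpow_neg, ← zpow_add₀ (ne_of_gt hp0)]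
  simp

/-- The `p`-adic fractional part `{y}_p`, as a rational number. -/
noncomputable def fract (y : ℚ_[p]) : ℚ :=
  if h : ‖y‖ ≤ 1 then 0
  else
    ((PadicInt.toZModPow ((-y.valuation).toNat)
        (⟨(p : ℚ_[p]) ^ ((-y.valuation).toNat) * y, norm_scaled_le_one p y h⟩ :
          ℤ_[p])).val : ℚ) / (p : ℚ) ^ ((-y.valuation).toNat)

/-- The standard additive character `χ_p(y) = exp(2 π i {y}_p)` of `(ℚ_p,+)`. -/
noncomputable def stdChar (y : ℚ_[p]) : ℂ :=
  Complex.exp (2 * (Real.pi : ℂ) * Complex.I * (fract p y : ℂ))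

/-- The ball `a + p^R ℤ_p` of radius `p^{-R}` centered at `a`. -/
def ballSet (R : ℤ) (a : ℚ_[p]) : Set ℚ_[p] := {x : ℚ_[p] | ‖x - a‖ ≤ (p : ℝ) ^ (-R)}

/-- `Ω(p^R |x - a|_p)`: the indicator function of the ball `a + p^R ℤ_p` (complex valued). -/
noncomputable def ballInd (R : ℤ) (a x : ℚ_[p]) : ℂ := if ‖x - a‖ ≤ (p : ℝ) ^ (-R) then 1 else 0

/-- `Ω(p^R |x - a|_p)`: the indicator function of the ball `a + p^R ℤ_p` (real valued). -/
noncomputable def ballIndR (R : ℤ) (a x : ℚ_[p]) : ℝ := if ‖x - a‖ ≤ (p : ℝ) ^ (-R) then 1 else 0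

/-- The Kozyrev wavelet
`Ψ_{rnj}(x) = p^{-r/2} χ_p(p^{-1} j (p^r x - n)) Ω(|p^r x - n|_p)`. -/
noncomputable def wavelet (r : ℤ) (n : ℚ_[p]) (j : ℕ) (x : ℚ_[p]) : ℂ :=
  (((p : ℝ) ^ (-(r : ℝ) / 2) : ℝ) : ℂ) *
    stdChar p ((p : ℚ_[p])⁻¹ * (j : ℚ_[p]) * ((p : ℚ_[p]) ^ r * x - n)) *
    ballInd p 0 0 ((p : ℚ_[p]) ^ r * x - n)

/-- The Fourier transform `ĝ(ξ) = ∫ χ_p(ξ x) g(x) dx` of a complex-valued function. -/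
noncomputable def fourierT (g : ℚ_[p] → ℂ) (ξ : ℚ_[p]) : ℂ :=
  ∫ x, stdChar p (ξ * x) * g x ∂(haar p)

/-- A function on `ℚ_p` is radial if it only depends on `|x|_p`. -/
def IsRadial (g : ℚ_[p] → ℝ) : Prop := ∀ x y : ℚ_[p], ‖x‖ = ‖y‖ → g x = g y

/-- Convolution `(g ∗ φ)(x) = ∫ g(x - y) φ(y) dy` of a real kernel with a complex function. -/
noncomputable def conv (g : ℚ_[p] → ℝ) (φ : ℚ_[p] → ℂ) (x : ℚ_[p]) : ℂ :=
  ∫ y, (g (x - y) : ℂ) * φ y ∂(haar p)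

/-- Real-valued convolution. -/
noncomputable def convR (g φ : ℚ_[p] → ℝ) (x : ℚ_[p]) : ℝ :=
  ∫ y, g (x - y) * φ y ∂(haar p)

/-- The fitness function `f(x) = Σ_{I ∈ G_M} f(I) Ω(p^M |x - I|_p)`. -/
noncomputable def fitness (fc : ℚ_[p] → ℝ) (M : ℕ) (G : Finset ℚ_[p]) (x : ℚ_[p]) : ℝ :=
  ∑ I ∈ G, fc I * ballIndR p M I x

/-- The matrix `W⁰` of the operator `W₀ φ = Q₀ ∗ (f φ)` on the span of the
indicator functions of the balls `I + p^M ℤ_p`, `I ∈ G_M`. -/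
noncomputable def Wmat (Q₀ fc : ℚ_[p] → ℝ) (M : ℕ) (G : Finset ℚ_[p]) :
    Matrix {I : ℚ_[p] // I ∈ G} {I : ℚ_[p] // I ∈ G} ℝ :=
  fun I J =>
    if I = J then fc I.1 * ∫ z in ballSet p M 0, Q₀ z ∂(haar p)
    else fc I.1 * Q₀ (J.1 - I.1) * (p : ℝ) ^ (-(M : ℤ))


/-- The operator `W₀ φ = Q₀ ∗ (f φ)` (complex-valued version). -/
noncomputable def Wop (Q₀ fc : ℚ_[p] → ℝ) (M : ℕ) (G : Finset ℚ_[p]) (φ : ℚ_[p] → ℂ)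
    (x : ℚ_[p]) : ℂ :=
  conv p Q₀ (fun y => ((fitness p fc M G y : ℝ) : ℂ) * φ y) x

/-- The operator `W₀ φ = Q₀ ∗ (f φ)` (real-valued version). -/
noncomputable def WopR (Q₀ fc : ℚ_[p] → ℝ) (M : ℕ) (G : Finset ℚ_[p]) (φ : ℚ_[p] → ℝ)
    (x : ℚ_[p]) : ℝ :=
  convR p Q₀ (fun y => fitness p fc M G y * φ y) x

/-- The `p`-adic heat kernel `Z(ξ; σ, α) = ∫ χ_p(ξ x) e^{-σ |x|_p^α} dx`. -/
noncomputable def heatK (σ α : ℝ) (ξ : ℚ_[p]) : ℂ :=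
  ∫ x, stdChar p (ξ * x) * ((Real.exp (-σ * ‖x‖ ^ α) : ℝ) : ℂ) ∂(haar p)

lemma exists_pow_mul_fract_eq_intCast (y : ℚ_[p]) :
    ∃ (k : ℕ) (m : ℤ), (p : ℚ) ^ k * fract p y = m := by
  unfold fract
  split_ifs
  · exact ⟨0, 0, by simp⟩
  · refine ⟨_, _, (mul_div_cancel₀ _ (pow_ne_zero _ ?_)).trans (Int.cast_natCast _).symm⟩
    exact Nat.cast_ne_zero.2 (Fact.out : p.Prime).ne_zero

lemma norm_sub_fract_le_one (y : ℚ_[p]) : ‖y - (fract p y : ℚ_[p])‖ ≤ 1 := by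
  by_cases h : ‖y‖ ≤ 1
  · simp [fract, h]
  set k := (-y.valuation).toNat
  set z : ℤ_[p] := ⟨(p : ℚ_[p]) ^ k * y, norm_scaled_le_one p y h⟩
  set m := (PadicInt.toZModPow k z).val
  have hzm : ‖z - (m : ℤ_[p])‖ ≤ (p : ℝ) ^ (-(k : ℤ)) := by
    rw [PadicInt.norm_le_pow_iff_mem_span_pow, ← PadicInt.ker_toZModPow, RingHom.mem_ker,
      map_sub, map_natCast, ZMod.natCast_zmod_val, sub_self]
  have hpk : (p : ℚ_[p]) ^ k ≠ 0 := pow_ne_zero _ (Nat.cast_ne_zero.2 (Fact.out : p.Prime).ne_zero)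
  have hfract : (fract p y : ℚ_[p]) = ((p : ℚ_[p]) ^ k)⁻¹ * m := by
    rw [fract, dif_neg h]; push_cast; ring
  have hsub : y - (fract p y : ℚ_[p]) = ((p : ℚ_[p]) ^ k)⁻¹ * ((z : ℚ_[p]) - m) := by
    rw [hfract, show (z : ℚ_[p]) = (p : ℚ_[p]) ^ k * y from rfl, mul_sub, inv_mul_cancel_left₀ hpk]
  have hzm' : ‖(z : ℚ_[p]) - m‖ ≤ (p : ℝ) ^ (-(k : ℤ)) := by
    rwa [← PadicInt.coe_natCast, ← PadicInt.coe_sub]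
  rw [hsub, norm_mul, norm_inv, Padic.norm_p_pow, zpow_neg, inv_inv]
  calc (p : ℝ) ^ (k : ℤ) * ‖(z : ℚ_[p]) - m‖ ≤ (p : ℝ) ^ (k : ℤ) * (p : ℝ) ^ (-(k : ℤ)) := by
        gcongr
    _ = 1 := by rw [← zpow_add₀ (by exact_mod_cast (Fact.out : p.Prime).ne_zero)]; simp

lemma exists_eq_intCast_of_pow_mul_eq_intCast {q : ℚ} {k : ℕ} {m : ℤ}
    (hq : (p : ℚ) ^ k * q = m) (h : ‖(q : ℚ_[p])‖ ≤ 1) : ∃ z : ℤ, q = z := by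
  have hpk : (p : ℚ) ^ k ≠ 0 := pow_ne_zero _ (Nat.cast_ne_zero.2 (Fact.out : p.Prime).ne_zero)
  have hdvd : (p : ℤ) ^ k ∣ m := by
    rw [← Padic.norm_int_le_pow_iff_dvd]
    have hm : (m : ℚ_[p]) = (p : ℚ_[p]) ^ k * q := by
      rw [← Rat.cast_intCast, ← hq]; push_cast; rfl
    rw [hm, norm_mul, Padic.norm_p_pow]
    exact mul_le_of_le_one_right (by positivity) h
  obtain ⟨z, rfl⟩ := hdvd
  exact ⟨z, mul_left_cancel₀ hpk (by rw [hq]; push_cast; ring)⟩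

lemma cexp_two_pi_I_mul_eq_one_of_pow_mul_eq_intCast {q : ℚ} {k : ℕ} {m : ℤ}
    (hq : (p : ℚ) ^ k * q = m) (h : ‖(q : ℚ_[p])‖ ≤ 1) :
    Complex.exp (2 * π * Complex.I * (q : ℂ)) = 1 := by
  obtain ⟨z, rfl⟩ := exists_eq_intCast_of_pow_mul_eq_intCast p hq h
  rw [Rat.cast_intCast, mul_comm, Complex.exp_int_mul_two_pi_mul_I]

lemma stdChar_add_of_norm_le_one {u : ℚ_[p]} (hu : ‖u‖ ≤ 1) (v : ℚ_[p]) :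
    stdChar p (u + v) = stdChar p v := by
  obtain ⟨k, m, hm⟩ := exists_pow_mul_fract_eq_intCast p (u + v)
  obtain ⟨k', m', hm'⟩ := exists_pow_mul_fract_eq_intCast p v
  have hq : (p : ℚ) ^ (k + k') * (fract p (u + v) - fract p v) = m * p ^ k' - m' * p ^ k := by
    rw [← hm, ← hm']; ring
  have hnorm : ‖((fract p (u + v) - fract p v : ℚ) : ℚ_[p])‖ ≤ 1 := by
    have : ((fract p (u + v) - fract p v : ℚ) : ℚ_[p]) =
        (u + (v - fract p v)) - (u + v - fract p (u + v)) := by push_cast; ring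
    rw [this, sub_eq_add_neg]
    refine (Padic.nonarchimedean _ _).trans (max_le ((Padic.nonarchimedean _ _).trans
      (max_le hu (norm_sub_fract_le_one p v))) ?_)
    rw [norm_neg]; exact norm_sub_fract_le_one p (u + v)
  have hsplit : (fract p (u + v) : ℂ) = ((fract p (u + v) - fract p v : ℚ) : ℂ) + fract p v := by
    push_cast; ring
  rw [stdChar, stdChar, hsplit, mul_add, Complex.exp_add,
    cexp_two_pi_I_mul_eq_one_of_pow_mul_eq_intCast p (by exact_mod_cast hq) hnorm, one_mul]

lemma stdChar_pow_eq_one {y : ℚ_[p]} (hy : ‖y‖ ≤ p) : stdChar p y ^ p = 1 := by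
  obtain ⟨k, m, hm⟩ := exists_pow_mul_fract_eq_intCast p y
  have hq : (p : ℚ) ^ k * (p * fract p y) = (p * m : ℤ) := by push_cast; rw [← hm]; ring
  have hnorm : ‖((p * fract p y : ℚ) : ℚ_[p])‖ ≤ 1 := by
    have : ((p * fract p y : ℚ) : ℚ_[p]) = p * y - p * (y - fract p y) := by push_cast; ring
    rw [this, sub_eq_add_neg]
    refine (Padic.nonarchimedean _ _).trans (max_le ?_ ?_)
    · rw [norm_mul, Padic.norm_p]
      exact inv_mul_le_one_of_le₀ hy (by positivity)
    · rw [norm_neg, norm_mul, Padic.norm_p]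
      exact mul_le_one₀ (inv_le_one_of_one_le₀ (by exact_mod_cast (Fact.out : p.Prime).one_le))
        (by positivity) (norm_sub_fract_le_one p y)
  rw [stdChar, ← Complex.exp_nat_mul, ← cexp_two_pi_I_mul_eq_one_of_pow_mul_eq_intCast p hq hnorm]
  push_cast; ring_nf

lemma norm_sub_le_zpow_of_le {R S : ℤ} {x y z : ℚ_[p]} (hRS : R ≤ S)
    (hxy : ‖x - y‖ ≤ (p : ℝ) ^ (-S)) (hyz : ‖y - z‖ ≤ (p : ℝ) ^ (-R)) :
    ‖x - z‖ ≤ (p : ℝ) ^ (-R) := by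
  have hp : (1 : ℝ) ≤ p := by exact_mod_cast (Fact.out : p.Prime).one_le
  have hxyz := IsUltrametricDist.dist_triangle_max x y z
  rw [dist_eq_norm, dist_eq_norm, dist_eq_norm] at hxyz
  exact hxyz.trans (max_le (hxy.trans (zpow_le_zpow_right₀ hp (neg_le_neg hRS))) hyz)

lemma ballInd_mul_ballInd_of_mem {R S : ℤ} {a b : ℚ_[p]} (hRS : R ≤ S)
    (ha : ‖a - b‖ ≤ (p : ℝ) ^ (-R)) (x : ℚ_[p]) :
    ballInd p R b x * ballInd p S a x = ballInd p S a x := by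
  unfold ballInd
  by_cases hxa : ‖x - a‖ ≤ (p : ℝ) ^ (-S)
  · rw [if_pos (norm_sub_le_zpow_of_le p hRS hxa ha), one_mul]
  · rw [if_neg hxa, mul_zero]

lemma ballInd_mul_ballInd_of_not_mem {R S : ℤ} {a b : ℚ_[p]} (hRS : R ≤ S)
    (ha : ¬‖a - b‖ ≤ (p : ℝ) ^ (-R)) (x : ℚ_[p]) :
    ballInd p R b x * ballInd p S a x = 0 := by
  unfold ballInd
  by_cases hxa : ‖x - a‖ ≤ (p : ℝ) ^ (-S)
  · rw [if_neg fun hxb => ha (norm_sub_le_zpow_of_le p hRS (by rwa [norm_sub_rev]) hxb),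
      zero_mul]
  · rw [if_neg hxa, mul_zero]

section WaveletPhase

variable (r : ℤ) (n : ℚ_[p]) (j : ℕ)

lemma norm_zpow_mul_sub (x : ℚ_[p]) :
    ‖(p : ℚ_[p]) ^ r * x - n‖ = (p : ℝ) ^ (-r) * ‖x - (p : ℚ_[p]) ^ (-r) * n‖ := by
  have hp : (p : ℚ_[p]) ≠ 0 := Nat.cast_ne_zero.2 (Fact.out : p.Prime).ne_zero
  rw [← Padic.norm_p_zpow, ← norm_mul, mul_sub, ← mul_assoc, ← zpow_add₀ hp, add_neg_cancel,
    zpow_zero, one_mul]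

lemma wavelet_eq (x : ℚ_[p]) :
    wavelet p r n j x = (((p : ℝ) ^ (-(r : ℝ) / 2) : ℝ) : ℂ) *
      stdChar p ((p : ℚ_[p])⁻¹ * (j : ℚ_[p]) * ((p : ℚ_[p]) ^ r * x - n)) *
      ballInd p (-r) ((p : ℚ_[p]) ^ (-r) * n) x := by
  have hp : (0 : ℝ) < p := by exact_mod_cast (Fact.out : p.Prime).pos
  have hsupp : ‖(p : ℚ_[p]) ^ r * x - n‖ ≤ 1 ↔ ‖x - (p : ℚ_[p]) ^ (-r) * n‖ ≤ (p : ℝ) ^ r := by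
    rw [norm_zpow_mul_sub, zpow_neg, inv_mul_le_iff₀ (zpow_pos hp r), mul_one]
  simp only [wavelet, ballInd, sub_zero, neg_zero, zpow_zero, neg_neg, hsupp]

lemma stdChar_phase_eq {x y : ℚ_[p]}
    (hxy : ‖x - y‖ ≤ (p : ℝ) ^ (r - 1)) :
    stdChar p ((p : ℚ_[p])⁻¹ * (j : ℚ_[p]) * ((p : ℚ_[p]) ^ r * x - n)) =
      stdChar p ((p : ℚ_[p])⁻¹ * (j : ℚ_[p]) * ((p : ℚ_[p]) ^ r * y - n)) := by
  have hp : (p : ℝ) ≠ 0 := by exact_mod_cast (Fact.out : p.Prime).ne_zero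
  rw [show (p : ℚ_[p])⁻¹ * j * ((p : ℚ_[p]) ^ r * x - n) =
      (p : ℚ_[p])⁻¹ * j * (p : ℚ_[p]) ^ r * (x - y) + (p : ℚ_[p])⁻¹ * j * ((p : ℚ_[p]) ^ r * y - n)
      by ring]
  refine stdChar_add_of_norm_le_one p ?_ _
  rw [norm_mul, norm_mul, norm_mul, norm_inv, Padic.norm_p, inv_inv, Padic.norm_p_zpow]
  calc (p : ℝ) * ‖(j : ℚ_[p])‖ * (p : ℝ) ^ (-r) * ‖x - y‖
      ≤ (p : ℝ) * 1 * (p : ℝ) ^ (-r) * (p : ℝ) ^ (r - 1) := by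
        gcongr
        exact IsUltrametricDist.norm_natCast_le_one ℚ_[p] j
    _ = 1 := by
        rw [mul_one, mul_assoc, ← zpow_add₀ hp, ← zpow_one_add₀ hp,
          show 1 + (-r + (r - 1)) = 0 by ring, zpow_zero]

lemma stdChar_phase_pow_eq_one {y : ℚ_[p]}
    (hy : ‖(p : ℚ_[p]) ^ (-r) * n - y‖ ≤ (p : ℝ) ^ r) :
    stdChar p ((p : ℚ_[p])⁻¹ * (j : ℚ_[p]) * ((p : ℚ_[p]) ^ r * y - n)) ^ p = 1 := by
  have hp : (0 : ℝ) < p := by exact_mod_cast (Fact.out : p.Prime).pos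
  refine stdChar_pow_eq_one p ?_
  rw [norm_mul, norm_mul, norm_inv, Padic.norm_p, inv_inv, norm_zpow_mul_sub, norm_sub_rev]
  calc (p : ℝ) * ‖(j : ℚ_[p])‖ * ((p : ℝ) ^ (-r) * ‖(p : ℚ_[p]) ^ (-r) * n - y‖)
      ≤ (p : ℝ) * 1 * ((p : ℝ) ^ (-r) * (p : ℝ) ^ r) := by
        gcongr
        exact IsUltrametricDist.norm_natCast_le_one ℚ_[p] j
    _ = p := by rw [mul_one, ← zpow_add₀ hp.ne']; simp

lemma stdChar_phase_mul_ballInd {R : ℤ} (hR : 1 - r ≤ R) (I x : ℚ_[p]) :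
    stdChar p ((p : ℚ_[p])⁻¹ * (j : ℚ_[p]) * ((p : ℚ_[p]) ^ r * x - n)) * ballInd p R I x =
      stdChar p ((p : ℚ_[p])⁻¹ * (j : ℚ_[p]) * ((p : ℚ_[p]) ^ r * I - n)) * ballInd p R I x := by
  have hp : (1 : ℝ) ≤ p := by exact_mod_cast (Fact.out : p.Prime).one_le
  unfold ballInd
  split_ifs with hx
  · rw [stdChar_phase_eq p r n j (hx.trans (zpow_le_zpow_right₀ hp (by omega)))]
  · rw [mul_zero, mul_zero]

end WaveletPhase

theorem wavelet_restriction_table_general (p : ℕ) [Fact p.Prime] (R₀ : ℤ) (I : ℚ_[p])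
    (r : ℤ) (n : ℚ_[p]) (j : ℕ) :
    -- (i)
    (r ≤ -R₀ → ‖(p : ℚ_[p]) ^ (-r) * n - I‖ ≤ (p : ℝ) ^ (-R₀) →
      ∀ x : ℚ_[p], ballInd p R₀ I x * wavelet p r n j x = wavelet p r n j x) ∧
    -- (ii)
    (r ≤ -R₀ → ¬ ‖(p : ℚ_[p]) ^ (-r) * n - I‖ ≤ (p : ℝ) ^ (-R₀) →
      ∀ x : ℚ_[p], ballInd p R₀ I x * wavelet p r n j x = 0) ∧
    -- (iii)
    (-R₀ + 1 ≤ r → ‖(p : ℚ_[p]) ^ (-r) * n - I‖ ≤ (p : ℝ) ^ r →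
      ((∀ x : ℚ_[p], ballInd p R₀ I x * wavelet p r n j x =
          stdChar p ((p : ℚ_[p])⁻¹ * (j : ℚ_[p]) * ((p : ℚ_[p]) ^ r * I - n)) *
            (((p : ℝ) ^ (-(r : ℝ) / 2) : ℝ) : ℂ) * ballInd p R₀ I x) ∧
        (stdChar p ((p : ℚ_[p])⁻¹ * (j : ℚ_[p]) * ((p : ℚ_[p]) ^ r * I - n))) ^ p = 1)) ∧
    -- (iv)
    (-R₀ + 1 ≤ r → ¬ ‖(p : ℚ_[p]) ^ (-r) * n - I‖ ≤ (p : ℝ) ^ r →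
      ∀ x : ℚ_[p], ballInd p R₀ I x * wavelet p r n j x = 0) := by
  simp only [wavelet_eq]
  refine ⟨fun hr ha x => ?_, fun hr ha x => ?_, fun hr ha => ⟨fun x => ?_, ?_⟩, fun hr ha x => ?_⟩
  · rw [mul_left_comm, ballInd_mul_ballInd_of_mem p (S := -r) (by omega) ha]
  · rw [mul_left_comm, ballInd_mul_ballInd_of_not_mem p (S := -r) (by omega) ha, mul_zero]
  · rw [mul_comm (ballInd p R₀ I x), mul_assoc, ballInd_mul_ballInd_of_mem p (by omega)
      (by rwa [neg_neg, norm_sub_rev]), mul_assoc, stdChar_phase_mul_ballInd p r n j (by omega)]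
    ring
  · exact stdChar_phase_pow_eq_one p r n j ha
  · rw [mul_comm (ballInd p R₀ I x), mul_assoc, ballInd_mul_ballInd_of_not_mem p (by omega)
      (by rwa [neg_neg, norm_sub_rev]), mul_zero]

/-- The restriction table of a Kozyrev wavelet `Ψ_{rnj}` to a ball
`I + p^{R₀}ℤ_p`: it equals `Ψ_{rnj}` itself, `0`, or a root of unity multiple of
`p^{-r/2} Ω(p^{R₀}|x-I|_p)`, according to the position of `p^{-r}n` and the size of `r`. -/
theorem wavelet_restriction_table (p : ℕ) [Fact p.Prime] (R₀ : ℤ) (I : ℚ_[p])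
    (r : ℤ) (n : ℚ_[p]) (j : ℕ) (hj1 : 1 ≤ j) (hj2 : j ≤ p - 1)
    (Rep : Set ℚ_[p]) (hRep : ∀ x : ℚ_[p], ∃! m : ℚ_[p], m ∈ Rep ∧ ‖x - m‖ ≤ 1)
    (hn : n ∈ Rep) :
    -- (i)
    (r ≤ -R₀ → ‖(p : ℚ_[p]) ^ (-r) * n - I‖ ≤ (p : ℝ) ^ (-R₀) →
      ∀ x : ℚ_[p], ballInd p R₀ I x * wavelet p r n j x = wavelet p r n j x) ∧
    -- (ii)
    (r ≤ -R₀ → ¬ ‖(p : ℚ_[p]) ^ (-r) * n - I‖ ≤ (p : ℝ) ^ (-R₀) →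
      ∀ x : ℚ_[p], ballInd p R₀ I x * wavelet p r n j x = 0) ∧
    -- (iii)
    (-R₀ + 1 ≤ r → ‖(p : ℚ_[p]) ^ (-r) * n - I‖ ≤ (p : ℝ) ^ r →
      ((∀ x : ℚ_[p], ballInd p R₀ I x * wavelet p r n j x =
          stdChar p ((p : ℚ_[p])⁻¹ * (j : ℚ_[p]) * ((p : ℚ_[p]) ^ r * I - n)) *
            (((p : ℝ) ^ (-(r : ℝ) / 2) : ℝ) : ℂ) * ballInd p R₀ I x) ∧
        (stdChar p ((p : ℚ_[p])⁻¹ * (j : ℚ_[p]) * ((p : ℚ_[p]) ^ r * I - n))) ^ p = 1)) ∧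
    -- (iv)
    (-R₀ + 1 ≤ r → ¬ ‖(p : ℚ_[p]) ^ (-r) * n - I‖ ≤ (p : ℝ) ^ r →
      ∀ x : ℚ_[p], ballInd p R₀ I x * wavelet p r n j x = 0) :=
  wavelet_restriction_table_general p R₀ I r n j

end PadicES
end

section
/- Let Q₀ be a nonnegative radial function supported in ℤ_p with Q₀ ∈ L¹(ℚ_p) and ∫_{ℤ_p}Q₀ = 1, and let W₀φ = Q₀ ∗ (fφ) with f(x) = Σ_{I∈G_M} f(I)·Ω(p^M|x−I|_p), f(I) > 0. Then for every I ∈ G_M, W₀Ω(p^M|x−I|_p) = f(I)·(∫_{p^Mℤ_p}Q₀(|z|_p)dz)·Ω(p^M|x−I|_p) + Σ_{J∈G_M, J≠I} f(I)·Q₀(|J−I|_p)·p^{−M}·Ω(p^M|x−J|_p). In particular the real span D_M of {Ω(p^M|x−I|_p)}_{I∈G_M} is invariant under W₀, and on D_M the operator W₀ is represented by the matrix W⁰ with W⁰_{II} = f(I)∫_{p^Mℤ_p}Q₀(|z|_p)dz and W⁰_{IJ} = f(I)Q₀(|J−I|_p)p^{−M} for I ≠ J. -/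
open MeasureTheory Filter
open scoped Real Topology ENNReal NNReal

namespace PadicES

variable (p : ℕ) [Fact p.Prime]

/-! On the ball `I + p^Mℤ_p` the fitness is the constant `f(I)`, so
`W₀Ω_I(x) = f(I) ∫_{I + p^Mℤ_p} Q₀(x - y) dy`, and everything follows from the ultrametric
inequality. If `x` lies in the same ball, that ball is also centred at `x` and `y ↦ x - y` maps it
onto `p^Mℤ_p`. If `x` lies in another ball `J + p^Mℤ_p`, all triangles being isosceles gives
`|x - y|_p = |J - I|_p` on the whole ball, so the radial `Q₀` is constant there and the integral is
`Q₀(J - I)` times the volume `p^{-M}` of a ball; this volume comes from splitting `ℤ_p` into the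
`p^M` disjoint translates `k + p^Mℤ_p`, `0 ≤ k < p^M`. If `x` lies in no ball, then `|x|_p > 1`,
hence `|x - y|_p = |x|_p` lies outside the support of `Q₀`. -/

theorem _root_.IsUltrametricDist.dist_eq_of_mem_closedBall_of_lt_dist {X : Type*}
    [PseudoMetricSpace X] [IsUltrametricDist X] {a b x y : X} {r : ℝ}
    (hx : x ∈ Metric.closedBall a r) (hy : y ∈ Metric.closedBall b r) (hr : r < dist a b) :
    dist x y = dist a b := by
  rw [Metric.mem_closedBall] at hx hy
  have hxb : dist x b = dist a b := by
    rw [IsUltrametricDist.dist_eq_max_of_dist_ne_dist x a b (by linarith)]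
    exact max_eq_right (by linarith)
  rw [IsUltrametricDist.dist_eq_max_of_dist_ne_dist x b y (by rw [dist_comm b]; linarith), hxb]
  exact max_eq_left (by rw [dist_comm]; linarith)

theorem _root_.MeasureTheory.setIntegral_closedBall_sub_left {E F : Type*}
    [NormedAddCommGroup E] [MeasurableSpace E] [BorelSpace E]
    [NormedAddCommGroup F] [NormedSpace ℝ F]
    (μ : Measure E) [μ.IsAddLeftInvariant] [μ.IsNegInvariant] (g : E → F) (x : E) (r : ℝ) :
    ∫ y in Metric.closedBall x r, g (x - y) ∂μ = ∫ z in Metric.closedBall 0 r, g z ∂μ := by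
  rw [← integral_indicator Metric.isClosed_closedBall.measurableSet,
    ← integral_indicator Metric.isClosed_closedBall.measurableSet,
    ← integral_sub_left_eq_self _ μ x]
  congr 1
  ext y
  simp [Set.indicator, dist_eq_norm]

instance : (haar p).IsAddHaarMeasure := by unfold haar; infer_instance

theorem unitBall_eq_closedBall : unitBall p = Metric.closedBall 0 1 := by
  ext x; simp [unitBall]

theorem ballSet_eq_closedBall (R : ℤ) (a : ℚ_[p]) :
    ballSet p R a = Metric.closedBall a ((p : ℝ) ^ (-R)) := by
  ext x; simp [ballSet, dist_eq_norm]

theorem ballInd_eq_indicator (R : ℤ) (a : ℚ_[p]) :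
    ballInd p R a = (ballSet p R a).indicator 1 := by
  ext x; simp [ballInd, ballSet, Set.indicator]

theorem ballIndR_eq_indicator (R : ℤ) (a : ℚ_[p]) :
    ballIndR p R a = (ballSet p R a).indicator 1 := by
  ext x; simp [ballIndR, ballSet, Set.indicator]

theorem ballSet_subset_unitBall (M : ℕ) {a : ℚ_[p]} (ha : ‖a‖ ≤ 1) :
    ballSet p M a ⊆ unitBall p := by
  rw [ballSet_eq_closedBall, unitBall_eq_closedBall,
    IsUltrametricDist.closedBall_eq_of_mem (x := 0) (by simpa using ha)]
  exact Metric.closedBall_subset_closedBall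
    (zpow_le_one_of_nonpos₀ (by exact_mod_cast (Fact.out : p.Prime).one_lt.le) (by omega))

theorem natCast_eq_of_norm_sub_le {M k l : ℕ} (hk : k < p ^ M) (hl : l < p ^ M)
    (h : ‖(k : ℚ_[p]) - l‖ ≤ (p : ℝ) ^ (-(M : ℤ))) : k = l := by
  have hdvd : (p : ℤ) ^ M ∣ (k : ℤ) - l := by
    rw [← Padic.norm_int_le_pow_iff_dvd]; push_cast; exact h
  have hk' : (k : ℤ) < (p : ℤ) ^ M := by exact_mod_cast hk
  have hl' : (l : ℤ) < (p : ℤ) ^ M := by exact_mod_cast hl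
  have := Int.eq_zero_of_abs_lt_dvd hdvd (by rw [abs_lt]; omega)
  omega

theorem unitBall_eq_biUnion_ballSet (M : ℕ) :
    unitBall p = ⋃ k ∈ Finset.range (p ^ M), ballSet p M (k : ℚ_[p]) := by
  refine subset_antisymm (fun x hx => ?_) (Set.iUnion₂_subset fun k _ =>
    ballSet_subset_unitBall p M (by simpa using Padic.norm_int_le_one (p := p) k))
  set z : ℤ_[p] := ⟨x, hx⟩
  refine Set.mem_biUnion (Finset.mem_range.2 (z.appr_lt M)) ?_
  have := (PadicInt.norm_le_pow_iff_mem_span_pow _ M).2 (z.appr_spec M)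
  rwa [PadicInt.norm_def, PadicInt.coe_sub, PadicInt.coe_natCast] at this

theorem pairwiseDisjoint_ballSet_natCast (M : ℕ) :
    (Finset.range (p ^ M) : Set ℕ).PairwiseDisjoint (fun k => ballSet p M (k : ℚ_[p])) := by
  intro k hk l hl hne
  refine Set.disjoint_left.2 fun x hxk hxl => hne (natCast_eq_of_norm_sub_le p
    (Finset.mem_range.1 hk) (Finset.mem_range.1 hl) ?_)
  simp only [ballSet_eq_closedBall, Metric.mem_closedBall] at hxk hxl
  rw [← dist_eq_norm]
  exact (IsUltrametricDist.dist_triangle_max _ x _).trans (max_le (by rwa [dist_comm]) hxl)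

theorem haar_ballSet (M : ℕ) (a : ℚ_[p]) : haar p (ballSet p M a) = ((p : ℝ≥0∞) ^ M)⁻¹ := by
  have hcenter : ∀ b : ℚ_[p], haar p (ballSet p M b) = haar p (ballSet p M 0) := fun b => by
    simp only [ballSet_eq_closedBall, Measure.addHaar_closedBall_center]
  refine ENNReal.eq_inv_of_mul_eq_one_left ?_
  calc haar p (ballSet p M a) * (p : ℝ≥0∞) ^ M
      = ∑ k ∈ Finset.range (p ^ M), haar p (ballSet p M (k : ℚ_[p])) := by
        simp [hcenter, mul_comm]
    _ = haar p (unitBall p) := by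
        rw [unitBall_eq_biUnion_ballSet p M, measure_biUnion_finset
          (pairwiseDisjoint_ballSet_natCast p M) fun k _ => by
            rw [ballSet_eq_closedBall]; exact Metric.isClosed_closedBall.measurableSet]
    _ = 1 := Measure.addHaarMeasure_self

theorem measureReal_ballSet (M : ℕ) (a : ℚ_[p]) :
    (haar p).real (ballSet p M a) = (p : ℝ) ^ (-(M : ℤ)) := by
  simp [measureReal_def, haar_ballSet]

theorem setIntegral_ballSet_sub_of_mem (R : ℤ) (Q : ℚ_[p] → ℝ) {a x : ℚ_[p]}
    (hx : x ∈ ballSet p R a) :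
    ∫ y in ballSet p R a, Q (x - y) ∂haar p = ∫ z in ballSet p R 0, Q z ∂haar p := by
  rw [ballSet_eq_closedBall] at hx ⊢
  rw [IsUltrametricDist.closedBall_eq_of_mem hx, setIntegral_closedBall_sub_left,
    ballSet_eq_closedBall]

theorem setIntegral_ballSet_sub_of_lt_norm (M : ℕ) {Q : ℚ_[p] → ℝ} (hQ : IsRadial p Q)
    {a b x : ℚ_[p]} (hx : x ∈ ballSet p M b) (hab : (p : ℝ) ^ (-(M : ℤ)) < ‖b - a‖) :
    ∫ y in ballSet p M a, Q (x - y) ∂haar p = Q (b - a) * (p : ℝ) ^ (-(M : ℤ)) := by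
  have hconst : ∀ y ∈ ballSet p M a, Q (x - y) = Q (b - a) := fun y hy => by
    rw [ballSet_eq_closedBall] at hx hy
    refine hQ _ _ ?_
    rw [← dist_eq_norm, ← dist_eq_norm,
      IsUltrametricDist.dist_eq_of_mem_closedBall_of_lt_dist hx hy (by rwa [dist_eq_norm])]
  rw [setIntegral_congr_fun (by rw [ballSet_eq_closedBall]; exact measurableSet_closedBall)
    hconst, setIntegral_const, measureReal_ballSet, smul_eq_mul, mul_comm]

theorem setIntegral_ballSet_sub_eq_zero (M : ℕ) {Q : ℚ_[p] → ℝ}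
    (hQ : ∀ x : ℚ_[p], ¬ ‖x‖ ≤ 1 → Q x = 0) {a x : ℚ_[p]} (ha : ‖a‖ ≤ 1) (hx : 1 < ‖x‖) :
    ∫ y in ballSet p M a, Q (x - y) ∂haar p = 0 := by
  refine setIntegral_eq_zero_of_forall_eq_zero fun y hy => hQ _ ?_
  have hy1 : y ∈ Metric.closedBall 0 1 :=
    unitBall_eq_closedBall p ▸ ballSet_subset_unitBall p M ha hy
  rw [← dist_eq_norm, IsUltrametricDist.dist_eq_of_mem_closedBall_of_lt_dist
    (Metric.mem_closedBall_self zero_le_one) hy1 (by rwa [dist_zero_right]), dist_zero_right]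
  exact hx.not_ge

section Partition

variable {M : ℕ} {G : Finset ℚ_[p]}

theorem pairwiseDisjoint_ballSet_of_existsUnique (hGsub : ∀ I ∈ G, ‖I‖ ≤ 1)
    (hG : ∀ x : ℚ_[p], ‖x‖ ≤ 1 → ∃! I : ℚ_[p], I ∈ G ∧ ‖x - I‖ ≤ (p : ℝ) ^ (-(M : ℤ))) :
    (G : Set ℚ_[p]).PairwiseDisjoint (ballSet p M) := fun I hI _ hJ hIJ =>
  Set.disjoint_left.2 fun x hxI hxJ =>
    hIJ ((hG x (ballSet_subset_unitBall p M (hGsub I hI) hxI)).unique ⟨hI, hxI⟩ ⟨hJ, hxJ⟩)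

theorem fitness_eq_of_mem_ballSet (fc : ℚ_[p] → ℝ)
    (hdisj : (G : Set ℚ_[p]).PairwiseDisjoint (ballSet p M))
    {I y : ℚ_[p]} (hI : I ∈ G) (hy : y ∈ ballSet p M I) : fitness p fc M G y = fc I := by
  rw [fitness, Finset.sum_eq_single_of_mem I hI fun J hJ hJI => ?_]
  · simp [ballIndR_eq_indicator, hy]
  · have hyJ : y ∉ ballSet p M J := fun hyJ => hJI (hdisj.elim_set hJ hI y hyJ hy)
    simp [ballIndR_eq_indicator, hyJ]

theorem Wop_ballInd (Q₀ fc : ℚ_[p] → ℝ)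
    (hdisj : (G : Set ℚ_[p]).PairwiseDisjoint (ballSet p M))
    {I : ℚ_[p]} (hI : I ∈ G) (x : ℚ_[p]) :
    Wop p Q₀ fc M G (ballInd p M I) x =
      ((fc I * ∫ y in ballSet p M I, Q₀ (x - y) ∂haar p : ℝ) : ℂ) := by
  have hintegrand : ∀ y, (Q₀ (x - y) : ℂ) * ((fitness p fc M G y : ℂ) * ballInd p M I y) =
      ((ballSet p M I).indicator (fun y => fc I * Q₀ (x - y)) y : ℝ) := fun y => by
    by_cases hy : y ∈ ballSet p M I
    · simp [ballInd_eq_indicator, hy,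
        fitness_eq_of_mem_ballSet p fc hdisj hI hy, mul_comm]
    · simp [ballInd_eq_indicator, hy]
  rw [Wop, conv]
  simp_rw [hintegrand]
  rw [integral_complex_ofReal, integral_indicator
    (by rw [ballSet_eq_closedBall]; exact measurableSet_closedBall), integral_const_mul]

theorem Wmat_eq_setIntegral (Q₀ fc : ℚ_[p] → ℝ) (hQ₀ : IsRadial p Q₀)
    (hdisj : (G : Set ℚ_[p]).PairwiseDisjoint (ballSet p M))
    (I J : {I : ℚ_[p] // I ∈ G}) {x : ℚ_[p]} (hx : x ∈ ballSet p M J.1) :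
    Wmat p Q₀ fc M G I J = fc I.1 * ∫ y in ballSet p M I.1, Q₀ (x - y) ∂haar p := by
  by_cases hIJ : I = J
  · subst hIJ
    rw [Wmat, if_pos rfl, setIntegral_ballSet_sub_of_mem p _ _ hx]
  · have hfar : (p : ℝ) ^ (-(M : ℤ)) < ‖J.1 - I.1‖ := by
      refine lt_of_not_ge fun hle => hIJ (Subtype.ext ?_)
      refine hdisj.elim_set I.2 J.2 J.1 ?_ ?_
      · simpa [ballSet, norm_sub_rev] using hle
      · simp [ballSet]
    rw [Wmat, if_neg hIJ, setIntegral_ballSet_sub_of_lt_norm p M hQ₀ hx hfar, mul_assoc]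

theorem sum_mul_ballInd_of_mem (hdisj : (G : Set ℚ_[p]).PairwiseDisjoint (ballSet p M))
    (c : {I : ℚ_[p] // I ∈ G} → ℂ) {J : {I : ℚ_[p] // I ∈ G}} {x : ℚ_[p]}
    (hx : x ∈ ballSet p M J.1) :
    ∑ K ∈ G.attach, c K * ballInd p M K.1 x = c J := by
  rw [Finset.sum_eq_single_of_mem J (Finset.mem_attach _ _) fun K _ hKJ => ?_]
  · simp [ballInd_eq_indicator, hx]
  · have hxK : x ∉ ballSet p M K.1 := fun hxK =>
      hKJ (Subtype.ext (hdisj.elim_set K.2 J.2 x hxK hx))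
    simp [ballInd_eq_indicator, hxK]

end Partition

theorem Wop_on_indicators_general (p : ℕ) [Fact p.Prime] (Q₀ : ℚ_[p] → ℝ)
    (hrad : IsRadial p Q₀)
    (hsupp : ∀ x : ℚ_[p], ¬ ‖x‖ ≤ 1 → Q₀ x = 0)
    (M : ℕ) (G : Finset ℚ_[p])
    (hGsub : ∀ I ∈ G, ‖I‖ ≤ 1)
    (hG : ∀ x : ℚ_[p], ‖x‖ ≤ 1 → ∃! I : ℚ_[p], I ∈ G ∧ ‖x - I‖ ≤ (p : ℝ) ^ (-(M : ℤ)))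
    (fc : ℚ_[p] → ℝ) :
    ∀ I : {I : ℚ_[p] // I ∈ G}, ∀ x : ℚ_[p],
      Wop p Q₀ fc M G (ballInd p M I.1) x =
        ∑ J ∈ G.attach, ((Wmat p Q₀ fc M G I J : ℝ) : ℂ) * ballInd p M J.1 x := by
  have hdisj := pairwiseDisjoint_ballSet_of_existsUnique p hGsub hG
  intro I x
  rw [Wop_ballInd p Q₀ fc hdisj I.2]
  by_cases hx : ∃ J ∈ G, x ∈ ballSet p M J
  · obtain ⟨J, hJ, hxJ⟩ := hx
    rw [sum_mul_ballInd_of_mem p hdisj _ (J := ⟨J, hJ⟩) hxJ,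
      Wmat_eq_setIntegral p Q₀ fc hrad hdisj I ⟨J, hJ⟩ hxJ]
  · have hx1 : 1 < ‖x‖ := lt_of_not_ge fun hle => hx (hG x hle).exists
    have hxJ : ∀ J : {I : ℚ_[p] // I ∈ G}, ballInd p M J.1 x = 0 := fun J => by
      have : x ∉ ballSet p M J.1 := fun h => hx ⟨J.1, J.2, h⟩
      simp [ballInd_eq_indicator, this]
    simp [setIntegral_ballSet_sub_eq_zero p M hsupp (hGsub I.1 I.2) hx1, hxJ]

/-- Action of `W₀` on the indicator functions: for every `I ∈ G_M`,
`W₀ Ω(p^M|·-I|_p) = f(I)(∫_{p^Mℤ_p}Q₀)·Ω(p^M|·-I|_p) + Σ_{J≠I} f(I)Q₀(|J-I|_p)p^{-M}·Ω(p^M|·-J|_p)`;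
in particular the span of the indicators is invariant under `W₀`, with matrix `W⁰ = Wmat`. -/
theorem Wop_on_indicators (p : ℕ) [Fact p.Prime] (Q₀ : ℚ_[p] → ℝ)
    (hpos : ∀ x : ℚ_[p], 0 ≤ Q₀ x)
    (hrad : IsRadial p Q₀)
    (hsupp : ∀ x : ℚ_[p], ¬ ‖x‖ ≤ 1 → Q₀ x = 0)
    (hint : Integrable Q₀ (haar p))
    (hone : ∫ x in unitBall p, Q₀ x ∂(haar p) = 1)
    (M : ℕ) (hM : 1 ≤ M) (G : Finset ℚ_[p])
    (hGsub : ∀ I ∈ G, ‖I‖ ≤ 1)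
    (hG : ∀ x : ℚ_[p], ‖x‖ ≤ 1 → ∃! I : ℚ_[p], I ∈ G ∧ ‖x - I‖ ≤ (p : ℝ) ^ (-(M : ℤ)))
    (fc : ℚ_[p] → ℝ) (hfc : ∀ I ∈ G, 0 < fc I) :
    ∀ I : {I : ℚ_[p] // I ∈ G}, ∀ x : ℚ_[p],
      Wop p Q₀ fc M G (ballInd p M I.1) x =
        ∑ J ∈ G.attach, ((Wmat p Q₀ fc M G I J : ℝ) : ℂ) * ballInd p M J.1 x :=
  Wop_on_indicators_general p Q₀ hrad hsupp M G hGsub hG fc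

end PadicES
end

section
/- Assume the matrix W⁰ is symmetric, let λ_max be its largest eigenvalue, let c ∈ ℝ^{G_M}, and let w be the orthogonal projection of c onto the λ_max-eigenspace of W⁰. If Σ_{I∈G_M} w_I ≠ 0, then, with convergence in L²(ℤ_p), lim_{t→∞} (Σ_{I∈G_M}(e^{tW⁰}c)_I·Ω(p^M|x−I|_p)) / (p^{−M}Σ_{I∈G_M}(e^{tW⁰}c)_I) = (Σ_{I∈G_M} w_I·Ω(p^M|x−I|_p)) / (p^{−M}Σ_{I∈G_M} w_I); i.e. in the long term the normalized solution converges to a finite linear combination of the indicator functions of the balls I+p^Mℤ_p (survival of the fitter). -/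
open MeasureTheory Filter
open scoped Real Topology ENNReal NNReal

/-!
In an orthonormal eigenbasis of the symmetric matrix `W⁰`, the flow `e^{tW⁰}` multiplies the
`k`-th coordinate by `e^{tμ_k}`; after rescaling by `e^{-tλ_max}` only the coordinates along the
`λ_max`-eigenspace survive, so `e^{-tλ_max} e^{tW⁰} c → w`. The normalized solution does not see
this rescaling, hence its coefficients converge to those of `w / (p^{-M} Σ_I w_I)`, and since the
indicator functions of the balls are in `L²`, convergence of these finitely many coefficients is
convergence in `L²`.
-/

open scoped Matrix

section EigenvalueAsymptotics

variable {n : Type*} [Fintype n]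

theorem Matrix.exp_mulVec_of_mulVec_eq_smul [DecidableEq n] {A : Matrix n n ℝ} {v : n → ℝ}
    {μ : ℝ} (hv : A *ᵥ v = μ • v) : NormedSpace.exp A *ᵥ v = Real.exp μ • v := by
  let : NormedRing (Matrix n n ℝ) := Matrix.linftyOpNormedRing
  let : NormedAlgebra ℝ (Matrix n n ℝ) := Matrix.linftyOpNormedAlgebra
  have hpow (k : ℕ) : (A ^ k) *ᵥ v = μ ^ k • v := by
    induction k with
    | zero => simp
    | succ k ih => rw [pow_succ', ← Matrix.mulVec_mulVec, ih, Matrix.mulVec_smul, hv, smul_smul,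
        pow_succ]
  have hmat : HasSum (fun k => ((k.factorial : ℝ)⁻¹ • A ^ k) *ᵥ v) (NormedSpace.exp A *ᵥ v) :=
    (NormedSpace.exp_series_hasSum_exp' (𝕂 := ℝ) A).map (Matrix.mulVec.addMonoidHomLeft v)
      (continuous_id.matrix_mulVec continuous_const)
  have hscalar : HasSum (fun k => ((k.factorial : ℝ)⁻¹ * μ ^ k) • v) (Real.exp μ • v) := by
    rw [Real.exp_eq_exp_ℝ]
    exact (NormedSpace.exp_series_hasSum_exp' (𝕂 := ℝ) μ).smul_const v
  refine hmat.unique (hscalar.congr_fun fun k => ?_)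
  rw [Matrix.smul_mulVec, hpow, smul_smul]

theorem Matrix.IsSymm.dotProduct_eq_zero_of_mulVec_eq_smul {R : Type*} [CommRing R]
    [NoZeroDivisors R] {A : Matrix n n R} (hA : A.IsSymm) {v w : n → R} {a b : R}
    (hv : A *ᵥ v = a • v) (hw : A *ᵥ w = b • w) (hab : a ≠ b) : v ⬝ᵥ w = 0 := by
  have : a • (v ⬝ᵥ w) = b • (v ⬝ᵥ w) := by
    rw [← smul_dotProduct, ← hv, ← dotProduct_smul, ← hw, Matrix.dotProduct_mulVec,
      ← Matrix.mulVec_transpose, hA.eq]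
  exact (mul_eq_mul_right_iff.mp this).resolve_left hab

theorem Matrix.IsHermitian.sum_dotProduct_eigenvectorBasis_smul [DecidableEq n]
    {A : Matrix n n ℝ} (hA : A.IsHermitian) (x : n → ℝ) :
    ∑ k, (⇑(hA.eigenvectorBasis k) ⬝ᵥ x) • ⇑(hA.eigenvectorBasis k) = x := by
  have := congrArg WithLp.ofLp (hA.eigenvectorBasis.sum_repr (WithLp.toLp 2 x))
  simp only [OrthonormalBasis.repr_apply_apply, WithLp.ofLp_sum, WithLp.ofLp_smul] at this
  convert this using 3 with k
  rw [EuclideanSpace.inner_eq_star_dotProduct]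
  simp [dotProduct_comm]

theorem Real.tendsto_exp_mul_atTop_of_nonpos {a : ℝ} (ha : a ≤ 0) :
    Tendsto (fun t : ℝ => Real.exp (t * a)) atTop (𝓝 (if a = 0 then 1 else 0)) := by
  split_ifs with h
  · simp [h]
  · exact Real.tendsto_exp_atBot.comp
      (tendsto_id.atTop_mul_const_of_neg (lt_of_le_of_ne ha h))

theorem Matrix.IsSymm.tendsto_exp_neg_mul_smul_exp_mulVec [DecidableEq n] {A : Matrix n n ℝ}
    (hA : A.IsSymm) {lmax : ℝ} (hlmax : lmax ∈ upperBounds (spectrum ℝ A)) {c w : n → ℝ}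
    (hw : A *ᵥ w = lmax • w) (hcw : ∀ v, A *ᵥ v = lmax • v → (c - w) ⬝ᵥ v = 0) :
    Tendsto (fun t : ℝ => Real.exp (-(t * lmax)) • NormedSpace.exp (t • A) *ᵥ c) atTop
      (𝓝 w) := by
  have hH : A.IsHermitian := hA
  set u : n → n → ℝ := fun k => ⇑(hH.eigenvectorBasis k)
  set μ := hH.eigenvalues
  have heig (k : n) : A *ᵥ u k = μ k • u k := hH.mulVec_eigenvectorBasis k
  have hexpand (t : ℝ) : Real.exp (-(t * lmax)) • NormedSpace.exp (t • A) *ᵥ c =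
      ∑ k, (Real.exp (t * (μ k - lmax)) * (u k ⬝ᵥ c)) • u k := by
    conv_lhs => rw [← hH.sum_dotProduct_eigenvectorBasis_smul c]
    simp only [Matrix.mulVec_sum, Matrix.mulVec_smul, Finset.smul_sum, smul_smul]
    refine Finset.sum_congr rfl fun k _ => ?_
    rw [Matrix.exp_mulVec_of_mulVec_eq_smul (μ := t * μ k)
      (by rw [Matrix.smul_mulVec, heig, smul_smul]), smul_smul,
      show t * (μ k - lmax) = -(t * lmax) + t * μ k by ring, Real.exp_add, mul_right_comm]
  have hlimit : ∑ k, ((if μ k - lmax = 0 then 1 else 0) * (u k ⬝ᵥ c)) • u k = w := by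
    conv_rhs => rw [← hH.sum_dotProduct_eigenvectorBasis_smul w]
    refine Finset.sum_congr rfl fun k _ => ?_
    split_ifs with hk
    · have h := hcw (u k) (by rw [heig, sub_eq_zero.mp hk])
      rw [sub_dotProduct, sub_eq_zero] at h
      rw [one_mul, dotProduct_comm, h, dotProduct_comm]
    · rw [zero_mul, hA.dotProduct_eq_zero_of_mulVec_eq_smul (heig k) hw (sub_ne_zero.mp hk)]
  rw [← hlimit]
  simp_rw [hexpand]
  exact tendsto_finsetSum _ fun k _ =>
    ((Real.tendsto_exp_mul_atTop_of_nonpos (sub_nonpos.mpr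
      (hlmax (hH.eigenvalues_mem_spectrum_real k)))).mul_const _).smul_const _

end EigenvalueAsymptotics

theorem tendsto_sum_inv_smul_of_tendsto_smul {ι α 𝕜 : Type*} [Fintype ι] [NormedField 𝕜]
    {l : Filter α} {s : α → 𝕜} {b : α → ι → 𝕜} {w : ι → 𝕜} (hs : ∀ t, s t ≠ 0)
    (hb : Tendsto (fun t => s t • b t) l (𝓝 w)) (hw : ∑ i, w i ≠ 0) :
    Tendsto (fun t => (∑ i, b t i)⁻¹ • b t) l (𝓝 ((∑ i, w i)⁻¹ • w)) := by
  have hscale (t : α) : (∑ i, b t i)⁻¹ • b t = (∑ i, (s t • b t) i)⁻¹ • (s t • b t) := by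
    simp only [Pi.smul_apply, smul_eq_mul, ← Finset.mul_sum, smul_smul, mul_inv]
    rw [mul_right_comm, inv_mul_cancel₀ (hs t), one_mul]
  have hcont : ContinuousAt (fun v : ι → 𝕜 => (∑ i, v i)⁻¹ • v) w :=
    ((continuous_finsetSum _ fun i _ => continuous_apply i).continuousAt.inv₀ hw).smul
      continuousAt_id
  exact (hcont.tendsto.comp hb).congr fun t => (hscale t).symm

theorem tendsto_eLpNorm_sum_mul_sub_sum_mul {ι α β : Type*} [Fintype ι] [MeasurableSpace α]
    {μ : Measure α} {q : ℝ≥0∞} (hq : 1 ≤ q) {φ : ι → α → ℝ} (hφ : ∀ i, MemLp (φ i) q μ)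
    {l : Filter β} {a : β → ι → ℝ} {a₀ : ι → ℝ} (ha : Tendsto a l (𝓝 a₀)) :
    Tendsto (fun t => eLpNorm (fun x => ∑ i, a t i * φ i x - ∑ i, a₀ i * φ i x) q μ) l
      (𝓝 0) := by
  have hbound (t : β) : eLpNorm (fun x => ∑ i, a t i * φ i x - ∑ i, a₀ i * φ i x) q μ ≤
      ∑ i, ‖a t i - a₀ i‖ₑ * eLpNorm (φ i) q μ := by
    have hdiff : (fun x => ∑ i, a t i * φ i x - ∑ i, a₀ i * φ i x) =
        ∑ i, (a t i - a₀ i) • φ i := by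
      ext x
      simp [Finset.sum_apply, sub_mul, Finset.sum_sub_distrib]
    rw [hdiff]
    calc eLpNorm (∑ i, (a t i - a₀ i) • φ i) q μ
        ≤ ∑ i, eLpNorm ((a t i - a₀ i) • φ i) q μ :=
          eLpNorm_sum_le (fun i _ => (hφ i).aestronglyMeasurable.const_smul _) hq
      _ = ∑ i, ‖a t i - a₀ i‖ₑ * eLpNorm (φ i) q μ := by simp_rw [eLpNorm_const_smul]
  have hlim : Tendsto (fun t => ∑ i, ‖a t i - a₀ i‖ₑ * eLpNorm (φ i) q μ) l (𝓝 0) := by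
    simpa using tendsto_finsetSum Finset.univ fun i _ =>
      ENNReal.Tendsto.mul_const ((((continuous_apply i).tendsto a₀).comp ha).sub_const
        (a₀ i)).enorm (Or.inr (hφ i).eLpNorm_ne_top)
  exact tendsto_of_tendsto_of_tendsto_of_le_of_le tendsto_const_nhds hlim (fun _ => bot_le)
    hbound

namespace PadicES

theorem memLp_ballIndR (p : ℕ) [Fact p.Prime] (R : ℤ) (a : ℚ_[p]) (q : ℝ≥0∞) :
    MemLp (ballIndR p R a) q (haar p) := by
  classical
  have hball : ballIndR p R a = (Metric.closedBall a ((p : ℝ) ^ (-R))).indicator fun _ => 1 := by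
    ext x
    simp only [ballIndR, Set.indicator_apply, Metric.mem_closedBall, dist_eq_norm]
  have : Measure.IsAddHaarMeasure (haar p) := by unfold haar; infer_instance
  rw [hball]
  exact memLp_indicator_const q Metric.isClosed_closedBall.measurableSet 1
    (Or.inr (isCompact_closedBall a _).measure_lt_top.ne)

theorem survival_of_the_fitter_general (p : ℕ) [Fact p.Prime] (Q₀ : ℚ_[p] → ℝ)
    (M : ℕ) (G : Finset ℚ_[p])
    (fc : ℚ_[p] → ℝ)
    (hsymm : (Wmat p Q₀ fc M G).IsSymm)
    (lmax : ℝ) (hlmax : IsGreatest (spectrum ℝ (Wmat p Q₀ fc M G)) lmax)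
    (c w : {I : ℚ_[p] // I ∈ G} → ℝ)
    -- `w` lies in the `lambda_max`-eigenspace
    (hw : (Wmat p Q₀ fc M G).mulVec w = lmax • w)
    -- and `c - w` is orthogonal to the `lambda_max`-eigenspace
    (hcw : ∀ v : {I : ℚ_[p] // I ∈ G} → ℝ,
      (Wmat p Q₀ fc M G).mulVec v = lmax • v → ∑ I, (c I - w I) * v I = 0)
    (hwsum : ∑ I, w I ≠ 0) :
    Filter.Tendsto
      (fun t : ℝ =>
        eLpNorm
          (fun x : ℚ_[p] =>
            (∑ I, (NormedSpace.exp (t • Wmat p Q₀ fc M G)).mulVec c I *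
                ballIndR p M I.1 x) /
              ((p : ℝ) ^ (-(M : ℤ)) *
                ∑ I, (NormedSpace.exp (t • Wmat p Q₀ fc M G)).mulVec c I) -
            (∑ I, w I * ballIndR p M I.1 x) / ((p : ℝ) ^ (-(M : ℤ)) * ∑ I, w I))
          2 (haar p))
      Filter.atTop (nhds 0) := by
  set b : ℝ → {I : ℚ_[p] // I ∈ G} → ℝ := fun t => NormedSpace.exp (t • Wmat p Q₀ fc M G) *ᵥ c
  set q : ℝ := (p : ℝ) ^ (-(M : ℤ))
  have hscaled := hsymm.tendsto_exp_neg_mul_smul_exp_mulVec hlmax.2 hw hcw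
  have hnormalized : Tendsto (fun t => q⁻¹ • (∑ I, b t I)⁻¹ • b t) atTop
      (𝓝 (q⁻¹ • (∑ I, w I)⁻¹ • w)) :=
    (tendsto_sum_inv_smul_of_tendsto_smul (fun t => (Real.exp_pos _).ne') hscaled
      hwsum).const_smul q⁻¹
  have hball (I : {I : ℚ_[p] // I ∈ G}) : MemLp (ballIndR p M I.1) 2 (haar p) :=
    memLp_ballIndR p M I.1 2
  refine (tendsto_eLpNorm_sum_mul_sub_sum_mul one_le_two hball hnormalized).congr fun t => ?_
  congr 1
  ext x
  simp only [Pi.smul_apply, smul_eq_mul, div_eq_mul_inv, Finset.sum_mul]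
  congr 1 <;> exact Finset.sum_congr rfl fun I _ => by ring

/-- Survival of the fitter: if `W⁰` is symmetric with largest eigenvalue
`lambda_max`, and `w` is the orthogonal projection of the initial coefficient vector `c` onto the
`lambda_max`-eigenspace, with `Σ_I w_I ≠ 0`, then in `L²(ℤ_p)` the normalized solution converges,
as `t → ∞`, to the corresponding normalized combination of indicator functions. -/
theorem survival_of_the_fitter (p : ℕ) [Fact p.Prime] (Q₀ : ℚ_[p] → ℝ)
    (hpos : ∀ x : ℚ_[p], 0 ≤ Q₀ x)
    (hrad : IsRadial p Q₀)
    (hsupp : ∀ x : ℚ_[p], ¬ ‖x‖ ≤ 1 → Q₀ x = 0)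
    (hint : Integrable Q₀ (haar p))
    (hone : ∫ x in unitBall p, Q₀ x ∂(haar p) = 1)
    (M : ℕ) (hM : 1 ≤ M) (G : Finset ℚ_[p])
    (hGsub : ∀ I ∈ G, ‖I‖ ≤ 1)
    (hG : ∀ x : ℚ_[p], ‖x‖ ≤ 1 → ∃! I : ℚ_[p], I ∈ G ∧ ‖x - I‖ ≤ (p : ℝ) ^ (-(M : ℤ)))
    (fc : ℚ_[p] → ℝ) (hfc : ∀ I ∈ G, 0 < fc I)
    (hsymm : (Wmat p Q₀ fc M G).IsSymm)
    (lmax : ℝ) (hlmax : IsGreatest (spectrum ℝ (Wmat p Q₀ fc M G)) lmax)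
    (c w : {I : ℚ_[p] // I ∈ G} → ℝ)
    -- `w` lies in the `lambda_max`-eigenspace
    (hw : (Wmat p Q₀ fc M G).mulVec w = lmax • w)
    -- and `c - w` is orthogonal to the `lambda_max`-eigenspace
    (hcw : ∀ v : {I : ℚ_[p] // I ∈ G} → ℝ,
      (Wmat p Q₀ fc M G).mulVec v = lmax • v → ∑ I, (c I - w I) * v I = 0)
    (hwsum : ∑ I, w I ≠ 0) :
    Filter.Tendsto
      (fun t : ℝ =>
        eLpNorm
          (fun x : ℚ_[p] =>
            (∑ I, (NormedSpace.exp (t • Wmat p Q₀ fc M G)).mulVec c I *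
                ballIndR p M I.1 x) /
              ((p : ℝ) ^ (-(M : ℤ)) *
                ∑ I, (NormedSpace.exp (t • Wmat p Q₀ fc M G)).mulVec c I) -
            (∑ I, w I * ballIndR p M I.1 x) / ((p : ℝ) ^ (-(M : ℤ)) * ∑ I, w I))
          2 (haar p))
      Filter.atTop (nhds 0) :=
  survival_of_the_fitter_general p Q₀ M G fc hsymm lmax hlmax c w hw hcw hwsum

end PadicES
end

section
/- Assume Hypothesis A (∫_{p^Mℤ_p}Q₀(|z|_p)dz ∈ (1/2,1)) and Hypothesis B: there exist a negative integer r₀ and I₀ ∈ G_M with Q̂₀(p^{1−r₀})·f(I₀) > μ_max, where μ_max is the maximum of the real parts of the eigenvalues of W⁰. Let c ∈ ℝ^{G_M} have all entries positive and set Ȳ(t) := p^{−M}Σ_{I∈G_M}(e^{tW⁰}c)_I. Then Ȳ(t) > 0 for all t ≥ 0 and lim_{t→∞} p^{−r₀/2}·e^{t·Q̂₀(p^{1−r₀})f(I₀)} / Ȳ(t) = +∞. In particular, any wavelet coefficient e^{t·Q̂₀(p^{1−r₀})f(I₀)}·C/Ȳ(t) of the normalized solution of the p-adic Eigen–Schuster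 model with C ≠ 0 does not tend to zero, i.e. the model admits a quasispecies solution. -/
open MeasureTheory Filter
open scoped Real Topology ENNReal NNReal

/-!
Since `W⁰` has nonnegative entries, `e^{tW⁰}` dominates the identity entrywise, so `Ȳ(t) > 0`.
Decomposing `ℂ^{G_M}` into generalized eigenspaces of `W⁰`, on the one for `μ` the
solution is `e^{tμ}` times a polynomial in `t`; as every `Re μ ≤ μ_max < λ := Q̂₀(p^{1-r₀}) f(I₀)`
by Hypothesis B, `e^{-tλ} Ȳ(t) → 0`, i.e. `e^{tλ} / Ȳ(t) → ∞`.
-/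

open Filter Topology NormedSpace

theorem Complex.tendsto_pow_mul_exp_mul_atTop_nhds_zero {z : ℂ} (hz : z.re < 0) (j : ℕ) :
    Tendsto (fun t : ℝ => (t : ℂ) ^ j * Complex.exp (t * z)) atTop (𝓝 0) := by
  refine squeeze_zero_norm' ?_
    (tendsto_rpow_mul_exp_neg_mul_atTop_nhds_zero j (-z.re) (neg_pos.mpr hz))
  filter_upwards [eventually_ge_atTop 0] with t ht
  simp [Complex.norm_exp, abs_of_nonneg ht, mul_comm t]

namespace Matrix
variable {n : Type*} [Fintype n] [DecidableEq n]

theorem hasSum_exp_mulVec {𝕂 : Type*} [RCLike 𝕂] (N : Matrix n n 𝕂) (v : n → 𝕂) :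
    HasSum (fun j => (j.factorial⁻¹ : 𝕂) • (N ^ j *ᵥ v)) (exp N *ᵥ v) := by
  open scoped Matrix.Norms.Operator in
  convert (exp_series_hasSum_exp' (𝕂 := 𝕂) N).map (mulVec.addMonoidHomLeft v)
    (continuous_id.matrix_mulVec continuous_const) using 1
  · exact funext fun j => (smul_mulVec _ _ _).symm
  · rfl

theorem exp_mulVec_eq_sum_of_pow_mulVec_eq_zero {𝕂 : Type*} [RCLike 𝕂] {N : Matrix n n 𝕂}
    {v : n → 𝕂} {k : ℕ} (hv : N ^ k *ᵥ v = 0) :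
    exp N *ᵥ v = ∑ j ∈ Finset.range k, (j.factorial⁻¹ : 𝕂) • (N ^ j *ᵥ v) := by
  refine (hasSum_exp_mulVec N v).unique (hasSum_sum_of_ne_finset_zero fun j hj => ?_)
  rw [Finset.mem_range, not_lt] at hj
  rw [← Nat.sub_add_cancel hj, pow_add, ← mulVec_mulVec, hv, mulVec_zero, smul_zero]

theorem one_apply_le_exp_apply {A : Matrix n n ℝ} (hA : ∀ i j, 0 ≤ A i j) (i j : n) :
    (1 : Matrix n n ℝ) i j ≤ exp A i j := by
  open scoped Matrix.Norms.Operator in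
  have hs := Pi.hasSum.mp (Pi.hasSum.mp (exp_series_hasSum_exp' (𝕂 := ℝ) A) i) j
  refine le_of_eq_of_le (by simp) (le_hasSum hs 0 fun k _ => ?_)
  rw [smul_apply, smul_eq_mul]
  exact mul_nonneg (by positivity) (pow_apply_nonneg hA k i j)

theorem exp_mulVec_pos {A : Matrix n n ℝ} (hA : ∀ i j, 0 ≤ A i j) {c : n → ℝ}
    (hc : ∀ i, 0 < c i) (i : n) : 0 < (exp A *ᵥ c) i :=
  calc 0 < c i := hc i
    _ = ((1 : Matrix n n ℝ) *ᵥ c) i := by rw [one_mulVec]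
    _ ≤ (exp A *ᵥ c) i := Finset.sum_le_sum fun j _ =>
      mul_le_mul_of_nonneg_right (one_apply_le_exp_apply hA i j) (hc j).le

theorem exp_smul_one_add (z : ℂ) (N : Matrix n n ℂ) :
    exp (z • (1 : Matrix n n ℂ) + N) = Complex.exp z • exp N := by
  rw [exp_add_of_commute _ _ ((Commute.one_left N).smul_left z), smul_one_eq_diagonal,
    exp_diagonal, Pi.exp_def, ← Complex.exp_eq_exp_ℂ, ← smul_one_eq_diagonal, smul_one_mul]

theorem exp_map_ofReal (A : Matrix n n ℝ) :
    (exp A).map Complex.ofReal = exp (A.map Complex.ofReal) := by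
  open scoped Matrix.Norms.Operator in
  exact map_exp (Complex.ofRealHom.mapMatrix : Matrix n n ℝ →+* Matrix n n ℂ)
    (continuous_id.matrix_map Complex.continuous_ofReal) A

theorem tendsto_exp_smul_mulVec_of_pow_sub_smul_mulVec_eq_zero {B : Matrix n n ℂ} {z : ℂ}
    (hz : z.re < 0) {k : ℕ} {v : n → ℂ} (hv : (B - z • 1) ^ k *ᵥ v = 0) :
    Tendsto (fun t : ℝ => exp (t • B) *ᵥ v) atTop (𝓝 0) := by
  set N := B - z • 1
  have hexpand : ∀ t : ℝ, exp (t • B) *ᵥ v = ∑ j ∈ Finset.range k,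
      ((t : ℂ) ^ j * Complex.exp (t * z) * (j.factorial⁻¹ : ℂ)) • (N ^ j *ᵥ v) := by
    intro t
    have hsplit : t • B = ((t : ℂ) * z) • 1 + (t : ℂ) • N := by
      rw [smul_sub, ← smul_smul, add_sub_cancel, Complex.coe_smul]
    have htN : ((t : ℂ) • N) ^ k *ᵥ v = 0 := by rw [smul_pow, smul_mulVec, hv, smul_zero]
    rw [hsplit, exp_smul_one_add, smul_mulVec, exp_mulVec_eq_sum_of_pow_mulVec_eq_zero htN,
      Finset.smul_sum]
    refine Finset.sum_congr rfl fun j _ => ?_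
    rw [smul_pow, smul_mulVec, smul_smul, smul_smul]
    ring_nf
  simp only [hexpand]
  simpa using tendsto_finsetSum _ fun j _ =>
    ((Complex.tendsto_pow_mul_exp_mul_atTop_nhds_zero hz j).mul_const _).smul_const (N ^ j *ᵥ v)

theorem tendsto_exp_smul_mulVec_of_forall_re_lt_zero {B : Matrix n n ℂ}
    (hB : ∀ z ∈ spectrum ℂ B, z.re < 0) (v : n → ℂ) :
    Tendsto (fun t : ℝ => exp (t • B) *ᵥ v) atTop (𝓝 0) := by
  have hv : v ∈ ⨆ μ, Module.End.maxGenEigenspace (toLinAlgEquiv' B) μ := by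
    rw [Module.End.iSup_maxGenEigenspace_eq_top]; trivial
  induction hv using Submodule.iSup_induction' with
  | mem μ x hx =>
    obtain ⟨k, hk⟩ := (Module.End.mem_maxGenEigenspace _ _ _).mp hx
    rw [← map_one (toLinAlgEquiv' (R := ℂ) (n := n)), ← _root_.map_smul, ← map_sub, ← map_pow,
      toLinAlgEquiv'_apply] at hk
    by_cases hμ : μ ∈ spectrum ℂ B
    · exact tendsto_exp_smul_mulVec_of_pow_sub_smul_mulVec_eq_zero (hB μ hμ) hk
    · have hunit : IsUnit ((B - μ • 1) ^ k) := by
        rw [spectrum.notMem_iff, Algebra.algebraMap_eq_smul_one, ← IsUnit.neg_iff, neg_sub] at hμ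
        exact hμ.pow k
      rw [mulVec_injective_iff_isUnit.mpr hunit (hk.trans (mulVec_zero _).symm)]
      simp
  | zero => simp
  | add x y _ _ hx hy => simpa [mulVec_add] using hx.add hy

theorem tendsto_exp_neg_mul_smul_exp_smul_mulVec {A : Matrix n n ℝ} {a : ℝ}
    (hA : ∀ z ∈ spectrum ℂ (A.map Complex.ofReal), z.re < a) (v : n → ℝ) :
    Tendsto (fun t : ℝ => Real.exp (-(t * a)) • (exp (t • A) *ᵥ v)) atTop (𝓝 0) := by
  have hB : ∀ z ∈ spectrum ℂ (A.map Complex.ofReal - (a : ℂ) • 1), z.re < 0 := by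
    intro z hz
    rw [← Algebra.algebraMap_eq_smul_one, ← spectrum.sub_singleton_eq] at hz
    obtain ⟨w, hw, _, rfl, rfl⟩ := hz
    simpa using hA w hw
  have hreal : ∀ (t : ℝ) i, (exp (t • (A.map Complex.ofReal - (a : ℂ) • 1)) *ᵥ
      (Complex.ofReal ∘ v)) i = ((Real.exp (-(t * a)) • (exp (t • A) *ᵥ v)) i : ℂ) := by
    intro t i
    have hsplit : t • (A.map Complex.ofReal - (a : ℂ) • 1) =
        (-(t * a) : ℂ) • 1 + (t • A).map Complex.ofReal := by
      ext j k
      by_cases hjk : j = k <;> simp [hjk]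
      ring
    rw [hsplit, exp_smul_one_add, ← exp_map_ofReal]
    simp [mulVec, dotProduct, Finset.mul_sum, mul_assoc]
  have hdecay := tendsto_exp_smul_mulVec_of_forall_re_lt_zero hB (Complex.ofReal ∘ v)
  rw [tendsto_pi_nhds] at hdecay ⊢
  intro i
  refine ((Complex.continuous_re.tendsto 0).comp (hdecay i)).congr fun t => ?_
  rw [Function.comp_apply, hreal, Complex.ofReal_re]

end Matrix

theorem tendsto_exp_mul_div_atTop {Y : ℝ → ℝ} {a : ℝ} (hY : ∀ᶠ t in atTop, 0 < Y t)
    (h : Tendsto (fun t => Real.exp (-(t * a)) * Y t) atTop (𝓝 0)) :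
    Tendsto (fun t => Real.exp (t * a) / Y t) atTop atTop := by
  refine (Tendsto.inv_tendsto_nhdsGT_zero (tendsto_nhdsWithin_iff.mpr ⟨h, ?_⟩)).congr fun t => ?_
  · filter_upwards [hY] with t ht using mul_pos (Real.exp_pos _) ht
  · rw [Pi.inv_apply, mul_inv, Real.exp_neg, inv_inv, div_eq_mul_inv]

namespace PadicES

theorem Wmat_nonneg (p : ℕ) [Fact p.Prime] {Q₀ fc : ℚ_[p] → ℝ} {M : ℕ} {G : Finset ℚ_[p]}
    (hQ₀ : ∀ x, 0 ≤ Q₀ x) (hfc : ∀ I ∈ G, 0 ≤ fc I) (I J : {I : ℚ_[p] // I ∈ G}) :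
    0 ≤ Wmat p Q₀ fc M G I J := by
  have hfcI := hfc I.1 I.2
  unfold Wmat
  split
  · exact mul_nonneg hfcI (integral_nonneg hQ₀)
  · exact mul_nonneg (mul_nonneg hfcI (hQ₀ _)) (zpow_nonneg (Nat.cast_nonneg p) _)

theorem quasispecies_exists_general (p : ℕ) [Fact p.Prime] (Q₀ : ℚ_[p] → ℝ)
    (hpos : ∀ x : ℚ_[p], 0 ≤ Q₀ x)
    (M : ℕ) (G : Finset ℚ_[p])
    (fc : ℚ_[p] → ℝ) (hfc : ∀ I ∈ G, 0 < fc I)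
    -- `μ_max` is the maximum of the real parts of the eigenvalues of `W⁰`
    (μmax : ℝ)
    (hμ : IsGreatest
      {x : ℝ | ∃ z ∈ spectrum ℂ ((Wmat p Q₀ fc M G).map Complex.ofReal), z.re = x} μmax)
    -- Hypothesis B
    (r₀ : ℤ) (I₀ : {I : ℚ_[p] // I ∈ G})
    (hB : μmax <
      (fourierT p (fun y => (Q₀ y : ℂ)) ((p : ℚ_[p]) ^ (r₀ - 1))).re * fc I₀.1)
    -- initial coefficient vector with positive entries
    (c : {I : ℚ_[p] // I ∈ G} → ℝ) (hc : ∀ I, 0 < c I) :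
    -- `Ȳ(t) > 0`
    (∀ t : ℝ, 0 ≤ t →
      0 < (p : ℝ) ^ (-(M : ℤ)) *
        ∑ I, (NormedSpace.exp (t • Wmat p Q₀ fc M G)).mulVec c I) ∧
    -- the normalized wavelet coefficient blows up
    Filter.Tendsto
      (fun t : ℝ =>
        (p : ℝ) ^ (-(r₀ : ℝ) / 2) *
          Real.exp (t * ((fourierT p (fun y => (Q₀ y : ℂ))
              ((p : ℚ_[p]) ^ (r₀ - 1))).re * fc I₀.1)) /
          ((p : ℝ) ^ (-(M : ℤ)) *
            ∑ I, (NormedSpace.exp (t • Wmat p Q₀ fc M G)).mulVec c I))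
      Filter.atTop Filter.atTop ∧
    -- hence no nonzero oscillatory coefficient of the normalized solution tends to zero
    (∀ C : ℝ, C ≠ 0 →
      ¬ Filter.Tendsto
        (fun t : ℝ =>
          Real.exp (t * ((fourierT p (fun y => (Q₀ y : ℂ))
              ((p : ℚ_[p]) ^ (r₀ - 1))).re * fc I₀.1)) * C /
            ((p : ℝ) ^ (-(M : ℤ)) *
              ∑ I, (NormedSpace.exp (t • Wmat p Q₀ fc M G)).mulVec c I))
        Filter.atTop (nhds 0)) := by
  set W := Wmat p Q₀ fc M G
  set a := (fourierT p (fun y => (Q₀ y : ℂ)) ((p : ℚ_[p]) ^ (r₀ - 1))).re * fc I₀.1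
  set Y : ℝ → ℝ := fun t => ∑ I, (NormedSpace.exp (t • W)).mulVec c I
  set q : ℝ := (p : ℝ) ^ (-(M : ℤ))
  set K : ℝ := (p : ℝ) ^ (-(r₀ : ℝ) / 2)
  have hp : (0 : ℝ) < p := Nat.cast_pos.mpr (Fact.out : p.Prime).pos
  have hq : 0 < q := zpow_pos hp _
  have hK : 0 < K := Real.rpow_pos_of_pos hp _
  have hW : ∀ I J, 0 ≤ W I J := Wmat_nonneg p hpos fun I hI => (hfc I hI).le
  have hY : ∀ t : ℝ, 0 ≤ t → 0 < Y t := fun t ht =>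
    Finset.sum_pos (fun I _ => Matrix.exp_mulVec_pos (fun I J => mul_nonneg ht (hW I J)) hc I)
      ⟨I₀, Finset.mem_univ _⟩
  have hdecay : Tendsto (fun t => Real.exp (-(t * a)) * Y t) atTop (𝓝 0) := by
    have h := Matrix.tendsto_exp_neg_mul_smul_exp_smul_mulVec
      (fun z hz => (hμ.2 ⟨z, hz, rfl⟩).trans_lt hB) c
    simpa [Y, Finset.mul_sum] using
      tendsto_finsetSum Finset.univ fun I _ => ((continuous_apply I).tendsto _).comp h
  have hblow : Tendsto (fun t => K * Real.exp (t * a) / (q * Y t)) atTop atTop :=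
    ((tendsto_exp_mul_div_atTop ((eventually_ge_atTop 0).mono hY) hdecay).const_mul_atTop
      (div_pos hK hq)).congr fun t => div_mul_div_comm _ _ _ _
  refine ⟨fun t ht => mul_pos hq (hY t ht), hblow, fun C hC hzero => ?_⟩
  refine not_tendsto_nhds_of_tendsto_atTop hblow 0 ?_
  have h := hzero.const_mul (K / C)
  rw [mul_zero] at h
  exact h.congr fun t => by simp only [Y]; field_simp

/-- Under Hypotheses A and B, the `p`-adic Eigen–Schuster model admits a
quasispecies solution: the wavelet coefficient `p^{-r₀/2} e^{t Q̂₀(p^{1-r₀}) f(I₀)} / Ȳ(t)`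
tends to `+∞`, so any nonzero oscillatory term of the normalized solution survives in the
long term. -/
theorem quasispecies_exists (p : ℕ) [Fact p.Prime] (Q₀ : ℚ_[p] → ℝ)
    (hpos : ∀ x : ℚ_[p], 0 ≤ Q₀ x)
    (hrad : IsRadial p Q₀)
    (hsupp : ∀ x : ℚ_[p], ¬ ‖x‖ ≤ 1 → Q₀ x = 0)
    (hint : Integrable Q₀ (haar p)) (hint2 : MemLp Q₀ 2 (haar p))
    (hone : ∫ x in unitBall p, Q₀ x ∂(haar p) = 1)
    (M : ℕ) (hM : 1 ≤ M) (G : Finset ℚ_[p])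
    (hGsub : ∀ I ∈ G, ‖I‖ ≤ 1)
    (hG : ∀ x : ℚ_[p], ‖x‖ ≤ 1 → ∃! I : ℚ_[p], I ∈ G ∧ ‖x - I‖ ≤ (p : ℝ) ^ (-(M : ℤ)))
    (fc : ℚ_[p] → ℝ) (hfc : ∀ I ∈ G, 0 < fc I)
    -- Hypothesis A
    (hA : (∫ z in ballSet p M 0, Q₀ z ∂(haar p)) ∈ Set.Ioo (1/2 : ℝ) 1)
    -- `μ_max` is the maximum of the real parts of the eigenvalues of `W⁰`
    (μmax : ℝ)
    (hμ : IsGreatest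
      {x : ℝ | ∃ z ∈ spectrum ℂ ((Wmat p Q₀ fc M G).map Complex.ofReal), z.re = x} μmax)
    -- Hypothesis B
    (r₀ : ℤ) (hr₀ : r₀ < 0) (I₀ : {I : ℚ_[p] // I ∈ G})
    (hB : μmax <
      (fourierT p (fun y => (Q₀ y : ℂ)) ((p : ℚ_[p]) ^ (r₀ - 1))).re * fc I₀.1)
    -- initial coefficient vector with positive entries
    (c : {I : ℚ_[p] // I ∈ G} → ℝ) (hc : ∀ I, 0 < c I) :
    -- `Ȳ(t) > 0`
    (∀ t : ℝ, 0 ≤ t →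
      0 < (p : ℝ) ^ (-(M : ℤ)) *
        ∑ I, (NormedSpace.exp (t • Wmat p Q₀ fc M G)).mulVec c I) ∧
    -- the normalized wavelet coefficient blows up
    Filter.Tendsto
      (fun t : ℝ =>
        (p : ℝ) ^ (-(r₀ : ℝ) / 2) *
          Real.exp (t * ((fourierT p (fun y => (Q₀ y : ℂ))
              ((p : ℚ_[p]) ^ (r₀ - 1))).re * fc I₀.1)) /
          ((p : ℝ) ^ (-(M : ℤ)) *
            ∑ I, (NormedSpace.exp (t • Wmat p Q₀ fc M G)).mulVec c I))
      Filter.atTop Filter.atTop ∧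
    -- hence no nonzero oscillatory coefficient of the normalized solution tends to zero
    (∀ C : ℝ, C ≠ 0 →
      ¬ Filter.Tendsto
        (fun t : ℝ =>
          Real.exp (t * ((fourierT p (fun y => (Q₀ y : ℂ))
              ((p : ℚ_[p]) ^ (r₀ - 1))).re * fc I₀.1)) * C /
            ((p : ℝ) ^ (-(M : ℤ)) *
              ∑ I, (NormedSpace.exp (t • Wmat p Q₀ fc M G)).mulVec c I))
        Filter.atTop (nhds 0)) :=
  quasispecies_exists_general p Q₀ hpos M G fc hfc μmax hμ r₀ I₀ hB c hc

end PadicES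
end

section
/- Fix a prime p, σ, α > 0, N = (∫_{ℤ_p}e^{−σ|x|_p^α}dx)^{−1}, and Q₀(|x|_p) = N·Ω(|x|_p)e^{−σ|x|_p^α}. Assume the heat kernel lower bound Z(ξ;σ,α) ≥ C₁σ/(|ξ|_p+σ^{1/α})^{1+α} for all ξ, with some constant C₁ > 0. Suppose r₀ is a negative integer with p^{1−r₀} ≤ σ^{1/α}, I₀ ∈ G_M satisfies f(I₀) ≥ 1, and N·C₁·σ^{−1/α}·2^{−(1+α)} > μ_max, where μ_max is the maximum of the real parts of the eigenvalues of the matrix W⁰. Then Hypothesis B holds: Q̂₀(p^{1−r₀})·f(I₀) > μ_max. (In particular this holds whenever σ < σ_max := (N·C₁/(2^{1+α}·μ_max))^α.) -/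
open MeasureTheory Filter
open scoped Real Topology ENNReal NNReal

namespace PadicES

variable (p : ℕ) [Fact p.Prime]

/-! `χ_p` is an additive character whose kernel lies in `ℤ_p`, so `χ_p(p⁻¹) ≠ 1`. Translating by
`t = (ξ p)⁻¹`, which has `|t|_p < 1`, preserves the region `|x|_p > 1` and multiplies `χ_p(ξ x)`
by `χ_p(p⁻¹)`, so for `|ξ|_p > p` the part of the heat kernel integral outside `ℤ_p` vanishes
and `Q̂₀(ξ) = N Z(ξ)`. At `|ξ|_p = p^{1-r₀} ≤ σ^{1/α}` the lower bound on `Z` gives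
`Q̂₀(ξ) ≥ N C₁ σ^{-1/α} 2^{-(1+α)} > μ_max`, and `f(I₀) ≥ 1`. -/

theorem integral_eq_zero_of_add_right_eq_smul {G 𝕜 E : Type*} [AddGroup G] [MeasurableSpace G]
    [MeasurableAdd G] {μ : Measure G} [μ.IsAddRightInvariant] [NontriviallyNormedField 𝕜]
    [NormedAddCommGroup E] [NormedSpace ℝ E] [NormedSpace 𝕜 E] [SMulCommClass ℝ 𝕜 E]
    {f : G → E} {t : G} {c : 𝕜} (hc : c ≠ 1) (hf : ∀ x, f (x + t) = c • f x) :
    ∫ x, f x ∂μ = 0 := by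
  have h : ∫ x, f x ∂μ = c • ∫ x, f x ∂μ := by
    rw [← integral_smul, ← integral_add_right_eq_self _ t]
    simp_rw [hf]
  have h' : (1 - c) • ∫ x, f x ∂μ = 0 := by rw [sub_smul, one_smul, ← h, sub_self]
  exact (smul_eq_zero.mp h').resolve_left (sub_ne_zero.mpr hc.symm)

lemma div_two_rpow_le_div_add_rpow {σ α C a : ℝ} (hσ : 0 < σ) (hα : 0 < α) (hC : 0 ≤ C)
    (ha : 0 ≤ a) (haσ : a ≤ σ ^ (1 / α)) :
    C * σ ^ (-(1 / α)) / 2 ^ (1 + α) ≤ C * σ / (a + σ ^ (1 / α)) ^ (1 + α) := by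
  have hs : 0 < σ ^ (1 / α) := Real.rpow_pos_of_pos hσ _
  have hpow : (2 * σ ^ (1 / α)) ^ (1 + α) = 2 ^ (1 + α) * (σ ^ (1 / α) * σ) := by
    rw [Real.mul_rpow zero_le_two hs.le, ← Real.rpow_mul hσ.le, mul_add, mul_one,
      one_div_mul_cancel hα.ne', Real.rpow_add hσ, Real.rpow_one]
  calc C * σ ^ (-(1 / α)) / 2 ^ (1 + α) = C * σ / (2 * σ ^ (1 / α)) ^ (1 + α) := by
        rw [hpow, Real.rpow_neg hσ.le]
        field_simp
    _ ≤ C * σ / (a + σ ^ (1 / α)) ^ (1 + α) := by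
        gcongr
        linarith

lemma den_natCast_div_dvd (m n : ℕ) : ((m : ℚ) / n).den ∣ n := by
  have := Rat.den_dvd m n
  rwa [Rat.divInt_eq_div, Int.cast_natCast, Int.cast_natCast, Int.natCast_dvd_natCast] at this

lemma exists_den_fract_dvd_pow (y : ℚ_[p]) : ∃ k : ℕ, (fract p y).den ∣ p ^ k := by
  unfold fract
  split_ifs with h
  · exact ⟨0, by simp⟩
  refine ⟨(-y.valuation).toNat, ?_⟩
  exact_mod_cast den_natCast_div_dvd _ (p ^ (-y.valuation).toNat)

lemma den_eq_one_of_norm_le_one {q : ℚ} {k : ℕ} (hk : q.den ∣ p ^ k) (hq : ‖(q : ℚ_[p])‖ ≤ 1) :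
    q.den = 1 := by
  rw [Padic.norm_rat_le_one_iff_padicValuation_le_one, Rat.padicValuation_le_one_iff] at hq
  exact (((Nat.Prime.coprime_iff_not_dvd Fact.out).mpr hq).symm.pow_right k).eq_one_of_dvd hk

lemma stdChar_add (a b : ℚ_[p]) : stdChar p (a + b) = stdChar p a * stdChar p b := by
  -- `d` lies in `ℤ_p` and has a `p`-power denominator, hence is an integer.
  set d : ℚ := fract p a + fract p b - fract p (a + b)
  have hnorm : ‖(d : ℚ_[p])‖ ≤ 1 := by
    have : (d : ℚ_[p]) = (a + b - fract p (a + b)) - (a - fract p a) - (b - fract p b) := by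
      push_cast [d]; ring
    rw [this, ← PadicInt.mem_subring_iff]
    exact sub_mem (sub_mem (norm_sub_fract_le_one p _) (norm_sub_fract_le_one p a))
      (norm_sub_fract_le_one p b)
  obtain ⟨k₁, hk₁⟩ := exists_den_fract_dvd_pow p a
  obtain ⟨k₂, hk₂⟩ := exists_den_fract_dvd_pow p b
  obtain ⟨k₃, hk₃⟩ := exists_den_fract_dvd_pow p (a + b)
  have hden : d.den ∣ p ^ (k₁ + k₂ + k₃) := by
    rw [pow_add, pow_add]
    exact ((Rat.sub_den_dvd _ _).trans (mul_dvd_mul (Rat.add_den_dvd _ _) hk₃)).trans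
      (mul_dvd_mul (mul_dvd_mul hk₁ hk₂) dvd_rfl)
  have hd : (d.num : ℚ) = d :=
    Rat.coe_int_num_of_den_eq_one (den_eq_one_of_norm_le_one p hden hnorm)
  have hsum : fract p a + fract p b = fract p (a + b) + d.num := by rw [hd]; ring
  simp only [stdChar, ← Complex.exp_add, ← mul_add]
  rw [← Rat.cast_add, hsum]
  push_cast
  rw [mul_add, Complex.exp_add, mul_comm _ (d.num : ℂ), Complex.exp_int_mul_two_pi_mul_I, mul_one]

lemma norm_le_one_of_stdChar_eq_one {y : ℚ_[p]} (h : stdChar p y = 1) : ‖y‖ ≤ 1 := by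
  obtain ⟨n, hn⟩ := Complex.exp_eq_one_iff.mp h
  have hfract : fract p y = n := by
    have : ((fract p y : ℚ) : ℂ) = (n : ℂ) := by
      have h2πI : 2 * (π : ℂ) * Complex.I ≠ 0 := by simp [Real.pi_ne_zero]
      apply mul_left_cancel₀ h2πI
      rw [hn]; ring
    exact_mod_cast this
  have hy : y = (y - (fract p y : ℚ_[p])) + (n : ℚ_[p]) := by rw [hfract]; push_cast; ring
  rw [hy, ← PadicInt.mem_subring_iff]
  exact add_mem (norm_sub_fract_le_one p y) (intCast_mem _ n)

lemma stdChar_inv_p_ne_one : stdChar p (p : ℚ_[p])⁻¹ ≠ 1 := fun h => by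
  have := norm_le_one_of_stdChar_eq_one p h
  rw [norm_inv, Padic.norm_p, inv_inv] at this
  exact (Nat.one_lt_cast.mpr (Fact.out : p.Prime).one_lt).not_ge this

lemma measurableSet_unitBall : MeasurableSet (unitBall p) :=
  (isClosed_le continuous_norm continuous_const).measurableSet

lemma setIntegral_compl_unitBall_stdChar_mul_radial_eq_zero {ξ : ℚ_[p]} (hξ : (p : ℝ) < ‖ξ‖)
    (φ : ℝ → ℂ) : ∫ x in (unitBall p)ᶜ, stdChar p (ξ * x) * φ ‖x‖ ∂(haar p) = 0 := by
  have hp0 : (0 : ℝ) < p := by exact_mod_cast (Fact.out : p.Prime).pos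
  have hξ0 : 0 < ‖ξ‖ := hp0.trans hξ
  have hξt : ξ * (ξ * p)⁻¹ = (p : ℚ_[p])⁻¹ := by
    rw [mul_inv, ← mul_assoc, mul_inv_cancel₀ (norm_pos_iff.mp hξ0), one_mul]
  set t : ℚ_[p] := (ξ * p)⁻¹
  have ht : ‖t‖ < 1 := by
    rw [norm_inv, norm_mul, Padic.norm_p, inv_lt_one₀ (mul_pos hξ0 (inv_pos.mpr hp0)),
      lt_mul_inv_iff₀ hp0, one_mul]
    exact hξ
  rw [← integral_indicator (measurableSet_unitBall p).compl]
  refine integral_eq_zero_of_add_right_eq_smul (stdChar_inv_p_ne_one p) (t := t) fun x => ?_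
  by_cases hx : ‖x‖ ≤ 1
  · have hxt : ‖x + t‖ ≤ 1 := by
      rw [← PadicInt.mem_subring_iff] at hx ⊢; exact add_mem hx ht.le
    simp [unitBall, hx, hxt]
  · have hxt : ‖x + t‖ = ‖x‖ := by
      rw [Padic.add_eq_max_of_ne (by linarith), max_eq_left (by linarith)]
    simp only [Set.indicator, Set.mem_compl_iff, unitBall, Set.mem_ofPred_eq, hxt, hx,
      not_false_eq_true, if_true, mul_add, stdChar_add, hξt, smul_eq_mul]
    ring

lemma fourierT_mul_ballIndR_mul_radial {ξ : ℚ_[p]} (hξ : (p : ℝ) < ‖ξ‖) (c : ℝ) (φ : ℝ → ℝ)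
    (hint : Integrable (fun x => stdChar p (ξ * x) * (φ ‖x‖ : ℂ)) (haar p)) :
    fourierT p (fun x => ((c * ballIndR p 0 0 x * φ ‖x‖ : ℝ) : ℂ)) ξ =
      c * ∫ x, stdChar p (ξ * x) * (φ ‖x‖ : ℂ) ∂(haar p) := by
  have hpt : ∀ x, stdChar p (ξ * x) * ((c * ballIndR p 0 0 x * φ ‖x‖ : ℝ) : ℂ) =
      c * (unitBall p).indicator (fun x => stdChar p (ξ * x) * (φ ‖x‖ : ℂ)) x := by
    intro x
    by_cases hx : ‖x‖ ≤ 1 <;> simp [ballIndR, unitBall, hx, mul_left_comm]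
  rw [fourierT]
  simp_rw [hpt]
  rw [integral_const_mul, integral_indicator (measurableSet_unitBall p),
    ← integral_add_compl (measurableSet_unitBall p) hint,
    setIntegral_compl_unitBall_stdChar_mul_radial_eq_zero p hξ (fun r => (φ r : ℂ)), add_zero]

theorem gibbs_hypothesis_B_general (p : ℕ) [Fact p.Prime] (σ α : ℝ)
    (hσ : 0 < σ) (hα : 0 < α) (C₁ : ℝ) (hC₁ : 0 < C₁)
    (hZ : ∀ ξ : ℚ_[p],
      C₁ * σ / (‖ξ‖ + σ ^ (1 / α)) ^ (1 + α) ≤ (heatK p σ α ξ).re)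
    (G : Finset ℚ_[p])
    (fc : ℚ_[p] → ℝ)
    -- `μ_max` is the maximum of the real parts of the eigenvalues of `W⁰` for the
    -- Gibbs-type mutation measure `Q₀ = N Ω e^{-σ|x|^α}`
    (μmax : ℝ)
    (r₀ : ℤ) (hr₀ : r₀ < 0)
    (hle : (p : ℝ) ^ ((1 : ℤ) - r₀) ≤ σ ^ (1 / α))
    (I₀ : {I : ℚ_[p] // I ∈ G}) (hI₀ : 1 ≤ fc I₀.1)
    (hcond : μmax <
      (∫ z in unitBall p, Real.exp (-σ * ‖z‖ ^ α) ∂(haar p))⁻¹ * C₁ * σ ^ (-(1 / α)) /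
        2 ^ (1 + α)) :
    μmax <
      (fourierT p
        (fun x => (((∫ z in unitBall p, Real.exp (-σ * ‖z‖ ^ α) ∂(haar p))⁻¹ *
            ballIndR p 0 0 x * Real.exp (-σ * ‖x‖ ^ α) : ℝ) : ℂ))
        ((p : ℚ_[p]) ^ (r₀ - 1))).re * fc I₀.1 := by
  set N := (∫ z in unitBall p, Real.exp (-σ * ‖z‖ ^ α) ∂(haar p))⁻¹
  set ξ : ℚ_[p] := (p : ℚ_[p]) ^ (r₀ - 1)
  have hξ : ‖ξ‖ = (p : ℝ) ^ ((1 : ℤ) - r₀) := by rw [Padic.norm_p_zpow, neg_sub]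
  have hpξ : (p : ℝ) < ‖ξ‖ := by
    rw [hξ]
    simpa using zpow_lt_zpow_right₀ (Nat.one_lt_cast.mpr (Fact.out : p.Prime).one_lt)
      (show (1 : ℤ) < 1 - r₀ by omega)
  have hZξ : C₁ * σ ^ (-(1 / α)) / 2 ^ (1 + α) ≤ (heatK p σ α ξ).re :=
    (div_two_rpow_le_div_add_rpow hσ hα hC₁.le (norm_nonneg ξ) (hξ ▸ hle)).trans (hZ ξ)
  have hZξ_pos : 0 < (heatK p σ α ξ).re := lt_of_lt_of_le (by positivity) hZξ
  -- A non-integrable integrand would give the junk value `Z(ξ) = 0`.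
  have hint : Integrable (fun x => stdChar p (ξ * x) * ((Real.exp (-σ * ‖x‖ ^ α) : ℝ) : ℂ))
      (haar p) :=
    Integrable.of_integral_ne_zero fun h => hZξ_pos.ne' (by rw [heatK, h, Complex.zero_re])
  have hN : 0 ≤ N :=
    inv_nonneg.mpr (setIntegral_nonneg (measurableSet_unitBall p) fun _ _ => (Real.exp_pos _).le)
  rw [fourierT_mul_ballIndR_mul_radial p hpξ N (fun r => Real.exp (-σ * r ^ α)) hint,
    Complex.re_ofReal_mul]
  calc μmax < N * (C₁ * σ ^ (-(1 / α)) / 2 ^ (1 + α)) := by rwa [← mul_div_assoc, ← mul_assoc]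
    _ ≤ N * (heatK p σ α ξ).re := mul_le_mul_of_nonneg_left hZξ hN
    _ ≤ N * (heatK p σ α ξ).re * fc I₀.1 :=
        le_mul_of_one_le_right (mul_nonneg hN hZξ_pos.le) hI₀

/-- Verification of Hypothesis B for the Gibbs-type mutation measure: if
`p^{1-r₀} ≤ σ^{1/α}` for some negative integer `r₀`, `f(I₀) ≥ 1`, and
`N C₁ σ^{-1/α} 2^{-(1+α)} > μ_max`, then `Q̂₀(p^{1-r₀}) f(I₀) > μ_max`. -/
theorem gibbs_hypothesis_B (p : ℕ) [Fact p.Prime] (σ α : ℝ)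
    (hσ : 0 < σ) (hα : 0 < α) (C₁ : ℝ) (hC₁ : 0 < C₁)
    (hZ : ∀ ξ : ℚ_[p],
      C₁ * σ / (‖ξ‖ + σ ^ (1 / α)) ^ (1 + α) ≤ (heatK p σ α ξ).re)
    (M : ℕ) (hM : 1 ≤ M) (G : Finset ℚ_[p])
    (hGsub : ∀ I ∈ G, ‖I‖ ≤ 1)
    (hG : ∀ x : ℚ_[p], ‖x‖ ≤ 1 → ∃! I : ℚ_[p], I ∈ G ∧ ‖x - I‖ ≤ (p : ℝ) ^ (-(M : ℤ)))
    (fc : ℚ_[p] → ℝ) (hfc : ∀ I ∈ G, 0 < fc I)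
    -- `μ_max` is the maximum of the real parts of the eigenvalues of `W⁰` for the
    -- Gibbs-type mutation measure `Q₀ = N Ω e^{-σ|x|^α}`
    (μmax : ℝ)
    (hμ : IsGreatest
      {x : ℝ | ∃ z ∈ spectrum ℂ
        ((Wmat p
            (fun x => (∫ z in unitBall p, Real.exp (-σ * ‖z‖ ^ α) ∂(haar p))⁻¹ *
              ballIndR p 0 0 x * Real.exp (-σ * ‖x‖ ^ α))
            fc M G).map Complex.ofReal), z.re = x} μmax)
    (r₀ : ℤ) (hr₀ : r₀ < 0)
    (hle : (p : ℝ) ^ ((1 : ℤ) - r₀) ≤ σ ^ (1 / α))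
    (I₀ : {I : ℚ_[p] // I ∈ G}) (hI₀ : 1 ≤ fc I₀.1)
    (hcond : μmax <
      (∫ z in unitBall p, Real.exp (-σ * ‖z‖ ^ α) ∂(haar p))⁻¹ * C₁ * σ ^ (-(1 / α)) /
        2 ^ (1 + α)) :
    μmax <
      (fourierT p
        (fun x => (((∫ z in unitBall p, Real.exp (-σ * ‖z‖ ^ α) ∂(haar p))⁻¹ *
            ballIndR p 0 0 x * Real.exp (-σ * ‖x‖ ^ α) : ℝ) : ℂ))
        ((p : ℚ_[p]) ^ (r₀ - 1))).re * fc I₀.1 :=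
  gibbs_hypothesis_B_general p σ α hσ hα C₁ hC₁ hZ G fc μmax r₀ hr₀ hle I₀ hI₀ hcond

end PadicES
end
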